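/- arXiv:1705.10160 — 9 statements merged into one kernel-verified Lean document; each statement's English description precedes it below -/
import Mathlib

section
/- Define the radius function ρ(x,v) as the unique r ≥ 0 with g(x, r·Lv) = 0 when such r exists (v ∈ F(x)), and ρ(x,v) = +∞ otherwise. Then ρ is continuous at every pair (x,v) with g(x,0) < 0 and v ∈ F(x): for any sequence (x_k, v_k) → (x,v) with v_k on the unit sphere, ρ(x_k, v_k) → ρ(x,v). -/
open Filter

private lemma convex_zero_sign {h : ℝ → ℝ} (hconv : ConvexOn ℝ Set.univ h)
    (h0 : h 0 < 0) {r₀ : ℝ} (hr₀ : 0 ≤ r₀) (hz : h r₀ = 0) :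
    (∀ s, 0 ≤ s → s < r₀ → h s < 0) ∧ ∀ s, r₀ < s → 0 < h s := by
  have hr₀pos : 0 < r₀ := by
    rcases hr₀.lt_or_eq with h' | h'
    · exact h'
    · exfalso; rw [← h'] at hz; linarith
  constructor
  · intro s hs hsr
    set t := s / r₀ with ht
    have ht0 : 0 ≤ t := div_nonneg hs hr₀
    have ht1 : t < 1 := (div_lt_one hr₀pos).2 hsr
    have hst : s = (1 - t) • (0:ℝ) + t • r₀ := by
      simp only [smul_eq_mul, mul_zero, zero_add, ht]
      exact (div_mul_cancel₀ s hr₀pos.ne').symm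
    have hle := hconv.2 (Set.mem_univ (0:ℝ)) (Set.mem_univ r₀)
      (show (0:ℝ) ≤ 1 - t by linarith) ht0 (show (1 - t) + t = 1 by ring)
    rw [← hst] at hle
    simp only [smul_eq_mul] at hle
    nlinarith
  · intro s hs
    have hspos : 0 < s := hr₀pos.trans hs
    set t := r₀ / s with ht
    have ht0 : 0 ≤ t := div_nonneg hr₀ hspos.le
    have ht1 : t < 1 := (div_lt_one hspos).2 hs
    have htpos : 0 < t := div_pos hr₀pos hspos
    have hst : r₀ = (1 - t) • (0:ℝ) + t • s := by
      simp only [smul_eq_mul, mul_zero, zero_add, ht]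
      exact (div_mul_cancel₀ r₀ hspos.ne').symm
    have hle := hconv.2 (Set.mem_univ (0:ℝ)) (Set.mem_univ s)
      (show (0:ℝ) ≤ 1 - t by linarith) ht0 (show (1 - t) + t = 1 by ring)
    rw [← hst] at hle
    simp only [smul_eq_mul] at hle
    nlinarith

/-- continuity of the radius function `ρ` at `(x, v)` with
`g x 0 < 0` and `v ∈ F(x)`: along any sequence `(x_k, v_k) → (x, v)` of points
with `v_k` on the unit sphere, eventually `v_k ∈ F(x_k)` and
`ρ (x_k, v_k) → ρ (x, v)`.  The function `ρ : X → E → ℝ` is characterized as the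
(unique) nonnegative zero of `r ↦ g y (r • L w)` whenever such a zero exists. -/
theorem radius_continuous
    {X : Type*} [NormedAddCommGroup X] [NormedSpace ℝ X] {m : ℕ}
    (g : X → EuclideanSpace ℝ (Fin m) → ℝ)
    (hg_lip : LocallyLipschitz fun p : X × EuclideanSpace ℝ (Fin m) => g p.1 p.2)
    (hg_conv : ∀ x, ConvexOn ℝ Set.univ (g x))
    (L : EuclideanSpace ℝ (Fin m) ≃L[ℝ] EuclideanSpace ℝ (Fin m))
    (ρ : X → EuclideanSpace ℝ (Fin m) → ℝ)
    (hρ : ∀ y w, (∃ r : ℝ, 0 ≤ r ∧ g y (r • L w) = 0) →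
      0 ≤ ρ y w ∧ g y (ρ y w • L w) = 0)
    (x : X) (v : EuclideanSpace ℝ (Fin m))
    (hx0 : g x 0 < 0) (hv : ‖v‖ = 1)
    (hvF : ∃ r : ℝ, 0 ≤ r ∧ g x (r • L v) = 0)
    (xk : ℕ → X) (vk : ℕ → EuclideanSpace ℝ (Fin m))
    (hvk : ∀ k, ‖vk k‖ = 1)
    (hxk : Tendsto xk atTop (nhds x)) (hvk' : Tendsto vk atTop (nhds v)) :
    (∀ᶠ k in atTop, ∃ r : ℝ, 0 ≤ r ∧ g (xk k) (r • L (vk k)) = 0) ∧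
      Tendsto (fun k => ρ (xk k) (vk k)) atTop (nhds (ρ x v)) := by
  have hcont : Continuous fun p : X × EuclideanSpace ℝ (Fin m) => g p.1 p.2 :=
    hg_lip.continuous
  set ρ₀ := ρ x v with hρ₀def
  obtain ⟨hρ₀0, hρ₀z⟩ := hρ x v hvF
  have hconv_line : ∀ (y : X) (w : EuclideanSpace ℝ (Fin m)),
      ConvexOn ℝ Set.univ fun r : ℝ => g y (r • L w) := by
    intro y w
    refine ⟨convex_univ, fun r _ s _ a b ha hb hab => ?_⟩
    simp only [smul_eq_mul]
    rw [show (a * r + b * s) • (L w : EuclideanSpace ℝ (Fin m))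
        = a • (r • L w) + b • (s • L w) by module]
    exact (hg_conv y).2 (Set.mem_univ _) (Set.mem_univ _) ha hb hab
  have hρ₀pos : 0 < ρ₀ := by
    rcases hρ₀0.lt_or_eq with h | h
    · exact h
    · exfalso; rw [← h, zero_smul] at hρ₀z; linarith
  obtain ⟨hneg, hpos⟩ := convex_zero_sign (hconv_line x v)
    (by simpa using hx0) hρ₀0 hρ₀z
  have E : ∀ δ : ℝ, 0 < δ → δ < ρ₀ → ∀ᶠ k in atTop,
      (∃ r : ℝ, 0 ≤ r ∧ g (xk k) (r • L (vk k)) = 0) ∧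
        |ρ (xk k) (vk k) - ρ₀| < δ := by
    intro δ hδ hδρ
    have ha0 : (0:ℝ) ≤ ρ₀ - δ := by linarith
    have hA : g x ((ρ₀ - δ) • L v) < 0 := hneg _ ha0 (by linarith)
    have hB : 0 < g x ((ρ₀ + δ) • L v) := hpos _ (by linarith)
    have htend : ∀ r : ℝ, Tendsto (fun k => g (xk k) (r • L (vk k))) atTop
        (nhds (g x (r • L v))) := by
      intro r
      have h1 : Tendsto (fun k => (xk k, r • L (vk k))) atTop (nhds (x, r • L v)) :=
        hxk.prodMk_nhds (((L.continuous.tendsto v).comp hvk').const_smul r)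
      exact (hcont.tendsto _).comp h1
    have e0 : ∀ᶠ k in atTop, g (xk k) 0 < 0 := by
      have h1 : Tendsto (fun k => (xk k, (0 : EuclideanSpace ℝ (Fin m)))) atTop
          (nhds (x, 0)) := hxk.prodMk_nhds tendsto_const_nhds
      exact ((hcont.tendsto _).comp h1).eventually_lt_const hx0
    have eA : ∀ᶠ k in atTop, g (xk k) ((ρ₀ - δ) • L (vk k)) < 0 :=
      (htend _).eventually_lt_const hA
    have eB : ∀ᶠ k in atTop, 0 < g (xk k) ((ρ₀ + δ) • L (vk k)) :=
      (htend _).eventually_const_lt hB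
    filter_upwards [e0, eA, eB] with k hk0 hkA hkB
    have hcontk : Continuous fun r : ℝ => g (xk k) (r • L (vk k)) := by
      exact hcont.comp (continuous_const.prodMk (continuous_id.smul continuous_const))
    have hivt := intermediate_value_Icc (by linarith : ρ₀ - δ ≤ ρ₀ + δ)
      hcontk.continuousOn
    obtain ⟨r, hrmem, hr0⟩ := hivt ⟨hkA.le, hkB.le⟩
    have hex : ∃ r : ℝ, 0 ≤ r ∧ g (xk k) (r • L (vk k)) = 0 :=
      ⟨r, le_trans ha0 hrmem.1, hr0⟩
    refine ⟨hex, ?_⟩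
    obtain ⟨hk1, hk2⟩ := hρ (xk k) (vk k) hex
    obtain ⟨hknc, hkpc⟩ := convex_zero_sign (hconv_line (xk k) (vk k))
      (by simpa using hk0) hk1 hk2
    have hlt1 : ρ₀ - δ < ρ (xk k) (vk k) := by
      by_contra hle
      push_neg at hle
      rcases hle.lt_or_eq with h | h
      · exact absurd (hkpc _ h) (by simpa using hkA.not_gt)
      · rw [h] at hk2; linarith
    have hlt2 : ρ (xk k) (vk k) < ρ₀ + δ := by
      by_contra hle
      push_neg at hle
      rcases hle.lt_or_eq with h | h
      · exact absurd (hknc _ (by linarith) h) (by simpa using hkB.not_gt)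
      · rw [← h] at hk2; linarith
    rw [abs_sub_lt_iff]
    constructor <;> linarith
  constructor
  · exact (E (ρ₀ / 2) (by linarith) (by linarith)).mono fun k hk => hk.1
  · rw [Metric.tendsto_atTop]
    intro ε hε
    have hδ : 0 < min ε ρ₀ / 2 := by positivity
    have hδρ : min ε ρ₀ / 2 < ρ₀ := by
      have := min_le_right ε ρ₀; linarith
    obtain ⟨N, hN⟩ := eventually_atTop.1 (E _ hδ hδρ)
    refine ⟨N, fun n hn => ?_⟩
    have h := (hN n hn).2
    rw [Real.dist_eq]
    have := min_le_left ε ρ₀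
    linarith
end

section
/- With ρ and F, I as above, if g(x,0) < 0 and v ∈ I(x), then for any sequence (x_k, v_k) → (x,v) with v_k ∈ F(x_k), one has ρ(x_k, v_k) → +∞. -/
open Filter

/-- if `g x 0 < 0` and `v ∈ I(x)` (i.e. `g x (r • L v) < 0` for all
`r ≥ 0`), then along any sequence `(x_k, v_k) → (x, v)` with `v_k ∈ F(x_k)` (on
the unit sphere) one has `ρ (x_k, v_k) → +∞`. -/
theorem radius_tendsto_atTop
    {X : Type*} [NormedAddCommGroup X] [NormedSpace ℝ X] {m : ℕ}
    (g : X → EuclideanSpace ℝ (Fin m) → ℝ)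
    (hg_lip : LocallyLipschitz fun p : X × EuclideanSpace ℝ (Fin m) => g p.1 p.2)
    (hg_conv : ∀ x, ConvexOn ℝ Set.univ (g x))
    (L : EuclideanSpace ℝ (Fin m) ≃L[ℝ] EuclideanSpace ℝ (Fin m))
    (ρ : X → EuclideanSpace ℝ (Fin m) → ℝ)
    (hρ : ∀ y w, (∃ r : ℝ, 0 ≤ r ∧ g y (r • L w) = 0) →
      0 ≤ ρ y w ∧ g y (ρ y w • L w) = 0)
    (x : X) (v : EuclideanSpace ℝ (Fin m))
    (hx0 : g x 0 < 0) (hv : ‖v‖ = 1)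
    (hvI : ∀ r : ℝ, 0 ≤ r → g x (r • L v) < 0)
    (xk : ℕ → X) (vk : ℕ → EuclideanSpace ℝ (Fin m))
    (hvk : ∀ k, ‖vk k‖ = 1)
    (hvkF : ∀ k, ∃ r : ℝ, 0 ≤ r ∧ g (xk k) (r • L (vk k)) = 0)
    (hxk : Tendsto xk atTop (nhds x)) (hvk' : Tendsto vk atTop (nhds v)) :
    Tendsto (fun k => ρ (xk k) (vk k)) atTop atTop := by
  have hgc : Continuous fun p : X × EuclideanSpace ℝ (Fin m) => g p.1 p.2 :=
    hg_lip.continuous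
  rw [tendsto_atTop]
  intro b
  set M : ℝ := max b 0 + 1 with hM
  have hcont : Continuous fun q : (X × EuclideanSpace ℝ (Fin m)) × ℝ =>
      g q.1.1 (q.2 • L q.1.2) := by
    have : Continuous fun q : (X × EuclideanSpace ℝ (Fin m)) × ℝ =>
        ((q.1.1, q.2 • L q.1.2) : X × EuclideanSpace ℝ (Fin m)) := by
      apply Continuous.prodMk (continuous_fst.comp continuous_fst)
      exact continuous_snd.smul (L.continuous.comp (continuous_snd.comp continuous_fst))
    exact hgc.comp this
  set n := {q : (X × EuclideanSpace ℝ (Fin m)) × ℝ | g q.1.1 (q.2 • L q.1.2) < 0} with hn_def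
  have hn : IsOpen n := isOpen_lt hcont continuous_const
  have hsub : ({(x, v)} : Set (X × EuclideanSpace ℝ (Fin m))) ×ˢ Set.Icc (0:ℝ) M ⊆ n := by
    rintro ⟨⟨y, w⟩, r⟩ ⟨hy, hr⟩
    simp only [Set.mem_singleton_iff, Prod.mk.injEq] at hy
    obtain ⟨rfl, rfl⟩ := hy
    exact hvI r hr.1
  obtain ⟨u, v', hu, hv'o, hxu, htv, huv⟩ :=
    generalized_tube_lemma isCompact_singleton isCompact_Icc hn hsub
  have hmem : ∀ᶠ k in atTop, (xk k, vk k) ∈ u :=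
    (hxk.prodMk_nhds hvk').eventually (hu.mem_nhds (hxu rfl))
  filter_upwards [hmem] with k hk
  obtain ⟨hr0, heq⟩ := hρ (xk k) (vk k) (hvkF k)
  by_contra hlt
  push_neg at hlt
  have hle : ρ (xk k) (vk k) ≤ M := by
    have : b ≤ max b 0 := le_max_left _ _
    linarith
  have hneg : (((xk k, vk k), ρ (xk k) (vk k)) :
      (X × EuclideanSpace ℝ (Fin m)) × ℝ) ∈ n := huv ⟨hk, htv ⟨hr0, hle⟩⟩
  simp only [hn_def, Set.mem_setOf_eq] at hneg
  linarith
end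

section
/- If g(x,0) < 0 and v ∈ F(x), then there exist neighborhoods U of x and V of v such that v' ∈ F(x') for all x' ∈ U and all unit vectors v' ∈ V. In other words, the set {(x,v) : g(x,0)<0, v ∈ F(x)} is open relative to X × S^{m-1}. -/
/-- openness of the finite-direction set: if `g x 0 < 0` and
`v ∈ F(x)`, then there are neighborhoods `U` of `x` and `V` of `v` such that
`v' ∈ F(x')` for every `x' ∈ U` and every unit vector `v' ∈ V`. -/
theorem finite_directions_open
    {X : Type*} [NormedAddCommGroup X] [NormedSpace ℝ X] {m : ℕ}
    (g : X → EuclideanSpace ℝ (Fin m) → ℝ)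
    (hg_cont : Continuous fun p : X × EuclideanSpace ℝ (Fin m) => g p.1 p.2)
    (hg_conv : ∀ x, ConvexOn ℝ Set.univ (g x))
    (L : EuclideanSpace ℝ (Fin m) ≃L[ℝ] EuclideanSpace ℝ (Fin m))
    (x : X) (v : EuclideanSpace ℝ (Fin m))
    (hx0 : g x 0 < 0) (hv : ‖v‖ = 1)
    (hvF : ∃ r : ℝ, 0 ≤ r ∧ g x (r • L v) = 0) :
    ∃ U ∈ nhds x, ∃ V ∈ nhds v, ∀ x' ∈ U, ∀ v' ∈ V, ‖v'‖ = 1 →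
      ∃ r : ℝ, 0 ≤ r ∧ g x' (r • L v') = 0 := by
  obtain ⟨r, hr, hgr⟩ := hvF
  set t : ℝ := r + 1 with ht
  have htpos : (0 : ℝ) < t := by positivity
  -- positivity at `t` via convexity
  have hgt : 0 < g x (t • L v) := by
    have hb : (0 : ℝ) ≤ r / t := by positivity
    have hb1 : r / t < 1 := by
      rw [div_lt_one htpos]; linarith
    have ha : (0 : ℝ) < 1 - r / t := by linarith
    have hconv := (hg_conv x).2 (Set.mem_univ (0 : EuclideanSpace ℝ (Fin m)))
      (Set.mem_univ (t • L v)) (le_of_lt ha) hb (by ring)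
    have hcomb : (1 - r / t) • (0 : EuclideanSpace ℝ (Fin m)) + (r / t) • (t • L v)
        = r • L v := by
      rw [smul_zero, zero_add, smul_smul, div_mul_cancel₀ _ (ne_of_gt htpos)]
    rw [hcomb, hgr] at hconv
    simp only [smul_eq_mul] at hconv
    by_contra h
    push_neg at h
    linarith [mul_pos ha (neg_pos.mpr hx0), mul_nonneg hb (neg_nonneg.mpr h)]
  -- continuity: get product neighborhood
  have hc1 : Continuous fun p : X × EuclideanSpace ℝ (Fin m) => g p.1 0 :=
    hg_cont.comp (continuous_fst.prodMk continuous_const)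
  have hc2 : Continuous fun p : X × EuclideanSpace ℝ (Fin m) => g p.1 (t • L p.2) :=
    hg_cont.comp (continuous_fst.prodMk
      ((L.continuous.comp continuous_snd).const_smul t))
  have hopen : IsOpen {p : X × EuclideanSpace ℝ (Fin m) |
      g p.1 0 < 0 ∧ 0 < g p.1 (t • L p.2)} := by
    exact (isOpen_lt hc1 continuous_const).inter (isOpen_lt continuous_const hc2)
  have hmem : (x, v) ∈ {p : X × EuclideanSpace ℝ (Fin m) |
      g p.1 0 < 0 ∧ 0 < g p.1 (t • L p.2)} := ⟨hx0, hgt⟩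
  have hnhds := hopen.mem_nhds hmem
  rw [mem_nhds_prod_iff] at hnhds
  obtain ⟨U, hU, V, hV, hUV⟩ := hnhds
  refine ⟨U, hU, V, hV, fun x' hx' v' hv' _ => ?_⟩
  have hW := hUV (Set.mk_mem_prod hx' hv')
  obtain ⟨h1, h2⟩ := hW
  -- intermediate value theorem on [0, t]
  have hcontf : ContinuousOn (fun s : ℝ => g x' (s • L v')) (Set.Icc 0 t) :=
    (hg_cont.comp ((continuous_const (y := x')).prodMk
      (continuous_id.smul (continuous_const (y := L v'))))).continuousOn
  have hivt := intermediate_value_Icc (le_of_lt htpos) hcontf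
  have h0mem : (0 : ℝ) ∈ Set.Icc (g x' ((0 : ℝ) • L v')) (g x' (t • L v')) := by
    constructor
    · simpa [zero_smul] using le_of_lt h1
    · exact le_of_lt h2
  obtain ⟨s, hs, hgs⟩ := hivt h0mem
  exact ⟨s, hs.1, hgs⟩
end

section
/- Let e(x,v) := μ_η({r ≥ 0 : g(x, rLv) ≤ 0}) where μ_η is the one-dimensional Chi-distribution with m degrees of freedom. If g(x,0) < 0 and v ∈ F(x), then e(x,v) = F_η(ρ(x,v)), where F_η is the cumulative distribution function of the Chi-distribution; and if v ∈ I(x), then e(x,v) = 1. -/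
open MeasureTheory

/-- with `e (x, v) := μ_η {r ≥ 0 | g x (r • L v) ≤ 0}` for a
probability measure `μ_η` concentrated on `[0, ∞)` with CDF `F_η`, one has
`e (x, v) = F_η (ρ (x, v))` for `v ∈ F(x)` (where `ρ (x, v)` is the zero radius),
and `e (x, v) = 1` for `v ∈ I(x)`. -/
theorem radial_prob_formula
    {X : Type*} [NormedAddCommGroup X] [NormedSpace ℝ X] {m : ℕ}
    (g : X → EuclideanSpace ℝ (Fin m) → ℝ)
    (hg_cont : Continuous fun p : X × EuclideanSpace ℝ (Fin m) => g p.1 p.2)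
    (hg_conv : ∀ x, ConvexOn ℝ Set.univ (g x))
    (L : EuclideanSpace ℝ (Fin m) ≃L[ℝ] EuclideanSpace ℝ (Fin m))
    (μη : Measure ℝ) [IsProbabilityMeasure μη]
    (hμ_supp : μη (Set.Iio 0) = 0)
    (Fη : ℝ → ℝ) (hF : ∀ t, Fη t = (μη (Set.Icc 0 t)).toReal)
    (x : X) (v : EuclideanSpace ℝ (Fin m))
    (hx0 : g x 0 < 0) (hv : ‖v‖ = 1) :
    (∀ ρ : ℝ, 0 ≤ ρ → g x (ρ • L v) = 0 →
        (μη {r : ℝ | 0 ≤ r ∧ g x (r • L v) ≤ 0}).toReal = Fη ρ) ∧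
      ((∀ r : ℝ, 0 ≤ r → g x (r • L v) < 0) →
        (μη {r : ℝ | 0 ≤ r ∧ g x (r • L v) ≤ 0}).toReal = 1) := by
  set h : ℝ → ℝ := fun r => g x (r • L v) with hh
  have h0 : h 0 < 0 := by simpa [hh] using hx0
  -- convexity of h
  have hconv : ∀ a b r s : ℝ, 0 ≤ a → 0 ≤ b → a + b = 1 →
      h (a * r + b * s) ≤ a * h r + b * h s := by
    intro a b r s ha hb hab
    have := (hg_conv x).2 (Set.mem_univ (r • L v)) (Set.mem_univ (s • L v)) ha hb hab
    simpa [hh, smul_smul, add_smul] using this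
  constructor
  · intro ρ hρ0 hρ
    have hρpos : 0 < ρ := by
      rcases lt_or_eq_of_le hρ0 with h' | h'
      · exact h'
      · exfalso; rw [← h'] at hρ
        rw [zero_smul] at hρ; exact absurd hρ (ne_of_lt hx0)
    have hset : {r : ℝ | 0 ≤ r ∧ g x (r • L v) ≤ 0} = Set.Icc 0 ρ := by
      ext r
      simp only [Set.mem_setOf_eq, Set.mem_Icc]
      constructor
      · rintro ⟨hr0, hr⟩
        refine ⟨hr0, ?_⟩
        by_contra hcon
        push_neg at hcon
        -- r > ρ, show h r > 0
        have ht0 : 0 < ρ / r := div_pos hρpos (hρpos.trans hcon)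
        have ht1 : ρ / r < 1 := (div_lt_one (hρpos.trans hcon)).2 hcon
        have key := hconv (1 - ρ/r) (ρ/r) 0 r (by linarith) (le_of_lt ht0) (by ring)
        have hρr : (1 - ρ/r) * 0 + (ρ/r) * r = ρ := by
          rw [mul_zero, zero_add, div_mul_cancel₀ _ (ne_of_gt (hρpos.trans hcon))]
        have hρ' : h ρ = 0 := hρ
        rw [hρr, hρ'] at key
        have hr2 : h r ≤ 0 := hr
        nlinarith
      · rintro ⟨hr0, hr⟩
        refine ⟨hr0, ?_⟩
        have key := hconv (1 - r/ρ) (r/ρ) 0 ρ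
          (by have := (div_le_one hρpos).2 hr; linarith)
          (div_nonneg hr0 (le_of_lt hρpos)) (by ring)
        have hrr : (1 - r/ρ) * 0 + (r/ρ) * ρ = r := by
          rw [mul_zero, zero_add, div_mul_cancel₀ _ (ne_of_gt hρpos)]
        have hρ' : h ρ = 0 := hρ
        rw [hrr, hρ'] at key
        have h1 : 0 ≤ 1 - r/ρ := by have := (div_le_one hρpos).2 hr; linarith
        show h r ≤ 0
        nlinarith
    rw [hset, hF]
  · intro hneg
    have hset : {r : ℝ | 0 ≤ r ∧ g x (r • L v) ≤ 0} = Set.Ici 0 := by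
      ext r
      simp only [Set.mem_setOf_eq, Set.mem_Ici]
      exact ⟨fun h => h.1, fun h => ⟨h, le_of_lt (hneg r h)⟩⟩
    rw [hset]
    have : Set.Ici (0:ℝ) = (Set.Iio 0)ᶜ := by simp
    rw [this, measure_compl measurableSet_Iio (measure_ne_top _ _), hμ_supp,
      measure_univ]
    simp
end

section
/- The radial probability function e(x,v) = μ_η({r ≥ 0 : g(x, rLv) ≤ 0}) is continuous at every (x,v) ∈ X × S^{m-1} with g(x,0) < 0. -/
/-!
For fixed `(x, v)` the slice `φ r = g x (r • L v)` is convex with `φ 0 < 0`, so the set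
`{r ≥ 0 | φ r ≤ 0}` is an interval starting at `0`: `φ < 0` below its right end `R` and `φ > 0`
beyond it. Given `ε`, pick `0 ≤ a < R < b` with `μ_η [a, b] ≤ ε` (possible since `μ_η` has no
atom at `R`), or `a` with `μ_η (a, ∞) ≤ ε` when `R = ∞`. The slices at nearby `(x', v')`
converge pointwise, so eventually they too are negative at `0` and `a` and positive at `b`, and
convexity squeezes their sublevel sets between `[0, a]` and `[0, b)`.
-/

open MeasureTheory

open Set Filter Topology
open scoped ENNReal

def radialSublevel (f : ℝ → ℝ) : Set ℝ := {r | 0 ≤ r ∧ f r ≤ 0}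

section Convex

variable {f : ℝ → ℝ} {a b c : ℝ}

theorem Icc_subset_radialSublevel (hf : ConvexOn ℝ (Ici 0) f) (h0 : f 0 ≤ 0) (ha : 0 ≤ a)
    (hfa : f a ≤ 0) : Icc 0 a ⊆ radialSublevel f :=
  (hf.convex_le 0).ordConnected.out ⟨self_mem_Ici, h0⟩ ⟨ha, hfa⟩

theorem radialSublevel_subset_Ico (hf : ConvexOn ℝ (Ici 0) f) (h0 : f 0 ≤ 0) (hb : 0 ≤ b)
    (hfb : 0 < f b) : radialSublevel f ⊆ Ico 0 b := fun _ hr =>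
  ⟨hr.1, lt_of_not_ge fun hbr =>
    hfb.not_ge (Icc_subset_radialSublevel hf h0 hr.1 hr.2 ⟨hb, hbr⟩).2⟩

theorem neg_of_forall_mem_Ico_nonpos (hf : ConvexOn ℝ (Ici 0) f) (h0 : f 0 < 0)
    (hc : ∀ r ∈ Ico 0 c, f r ≤ 0) (ha : a ∈ Ico 0 c) : f a < 0 := by
  rcases ha.1.eq_or_lt with rfl | ha0
  · exact h0
  by_contra! hfa
  have hac := ha.2
  have hmid : a ∈ openSegment ℝ 0 ((a + c) / 2) := by
    rw [openSegment_eq_Ioo (by linarith)]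
    exact ⟨ha0, by linarith⟩
  have := hf.lt_right_of_left_lt self_mem_Ici (by simp only [mem_Ici]; linarith) hmid
    (h0.trans_le hfa)
  linarith [hc ((a + c) / 2) ⟨by linarith, by linarith⟩]

end Convex

theorem tendsto_measure_of_forall_sandwich {α ι : Type*} [MeasurableSpace α] {μ : Measure α}
    {l : Filter ι} {s : ι → Set α} {s₀ : Set α} (hs₀ : μ s₀ ≠ ∞)
    (h : ∀ ε > 0, ∃ t u, t ⊆ s₀ ∧ s₀ ⊆ u ∧ μ u ≤ μ t + ε ∧ ∀ᶠ i in l, t ⊆ s i ∧ s i ⊆ u) :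
    Tendsto (fun i => μ (s i)) l (𝓝 (μ s₀)) := by
  refine (ENNReal.tendsto_nhds hs₀).2 fun ε hε => ?_
  obtain ⟨t, u, ht, hu, hgap, hev⟩ := h ε hε
  filter_upwards [hev] with i ⟨hti, hiu⟩
  constructor
  · calc μ s₀ - ε ≤ μ u - ε := by gcongr
      _ ≤ μ t := tsub_le_iff_right.2 hgap
      _ ≤ μ (s i) := measure_mono hti
  · calc μ (s i) ≤ μ u := measure_mono hiu
      _ ≤ μ t + ε := hgap
      _ ≤ μ s₀ + ε := by gcongr

section Bracket

variable {f : ℝ → ℝ} (μ : Measure ℝ) [IsFiniteMeasure μ] {ε : ℝ≥0∞}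

theorem exists_bracket_of_exists_pos (hf : ConvexOn ℝ (Ici 0) f) (h0 : f 0 < 0)
    (hpos : ∃ b, 0 ≤ b ∧ 0 < f b) (hμ : ∀ t, μ {t} = 0) (hε : 0 < ε) :
    ∃ a b, 0 ≤ a ∧ f a < 0 ∧ 0 ≤ b ∧ 0 < f b ∧ μ (Ico 0 b) ≤ μ (Icc 0 a) + ε := by
  set R := sInf {r | 0 ≤ r ∧ 0 < f r}
  have hR0 : 0 ≤ R := le_csInf hpos fun _ hr => hr.1
  have hbelow : ∀ r ∈ Ico 0 R, f r ≤ 0 := fun r hr =>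
    not_lt.1 fun h => notMem_of_lt_csInf hr.2 ⟨0, fun _ h => h.1⟩ ⟨hr.1, h⟩
  have habove : ∀ b, R < b → 0 < f b := fun b hb => by
    obtain ⟨r, ⟨hr0, hfr⟩, hrb⟩ := exists_lt_of_csInf_lt hpos hb
    by_contra! hfb
    exact hfr.not_ge (Icc_subset_radialSublevel hf h0.le (hr0.trans hrb.le) hfb ⟨hr0, hrb.le⟩).2
  -- `μ [R - δ, R + δ] → μ {R} = 0` as `δ → 0`
  obtain ⟨δ, hδε, hδ⟩ := ((((tendsto_measure_cthickening_of_isClosed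
    ⟨1, one_pos, measure_ne_top μ _⟩ isClosed_singleton).eventually
    (gt_mem_nhds (by rwa [hμ R]))).filter_mono nhdsWithin_le_nhds).and
    (self_mem_nhdsWithin : ∀ᶠ δ in 𝓝[>] (0 : ℝ), 0 < δ)).exists
  rw [Metric.cthickening_singleton _ hδ.le, Real.closedBall_eq_Icc] at hδε
  refine ⟨max 0 (R - δ), R + δ, le_max_left _ _, ?_, by linarith, habove _ (by linarith), ?_⟩
  · rcases le_total (R - δ) 0 with h | h
    · rw [max_eq_left h]; exact h0
    · rw [max_eq_right h]; exact neg_of_forall_mem_Ico_nonpos hf h0 hbelow ⟨h, by linarith⟩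
  · have hcover : Ico 0 (R + δ) ⊆ Icc 0 (max 0 (R - δ)) ∪ Icc (R - δ) (R + δ) := fun r hr => by
      by_cases h : r ≤ max 0 (R - δ)
      · exact Or.inl ⟨hr.1, h⟩
      · exact Or.inr ⟨(le_max_right _ _).trans (not_le.1 h).le, hr.2.le⟩
    calc μ (Ico 0 (R + δ)) ≤ μ (Icc 0 (max 0 (R - δ))) + μ (Icc (R - δ) (R + δ)) :=
          (measure_mono hcover).trans (measure_union_le _ _)
      _ ≤ μ (Icc 0 (max 0 (R - δ))) + ε := by gcongr

theorem exists_bracket_of_forall_nonpos (hf : ConvexOn ℝ (Ici 0) f) (h0 : f 0 < 0)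
    (hnonpos : ∀ r, 0 ≤ r → f r ≤ 0) (hε : 0 < ε) :
    ∃ a, 0 ≤ a ∧ f a < 0 ∧ μ (Ici 0) ≤ μ (Icc 0 a) + ε := by
  have hlim : Tendsto (fun a => μ (Icc 0 a)) atTop (𝓝 (μ (Ici 0))) := by
    rw [← iUnion_Icc_right]
    exact tendsto_measure_iUnion_atTop fun _ _ h => Icc_subset_Icc_right h
  obtain ⟨a, ha, hgap⟩ :=
    ((eventually_ge_atTop 0).and ((ENNReal.tendsto_nhds (measure_ne_top _ _)).1 hlim ε hε)).exists
  exact ⟨a, ha, neg_of_forall_mem_Ico_nonpos hf h0 (fun r hr => hnonpos r hr.1) ⟨ha, lt_add_one a⟩,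
    tsub_le_iff_right.1 hgap.1⟩

end Bracket

theorem tendsto_measure_radialSublevel {ι : Type*} {l : Filter ι} {f : ι → ℝ → ℝ} {φ : ℝ → ℝ}
    (hf : ∀ i, ConvexOn ℝ (Ici 0) (f i)) (hφ : ConvexOn ℝ (Ici 0) φ) (h0 : φ 0 < 0)
    (hlim : ∀ r, Tendsto (fun i => f i r) l (𝓝 (φ r)))
    (μ : Measure ℝ) [IsFiniteMeasure μ] (hμ : ∀ t, μ {t} = 0) :
    Tendsto (fun i => μ (radialSublevel (f i))) l (𝓝 (μ (radialSublevel φ))) := by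
  have hneg : ∀ {r}, φ r < 0 → ∀ᶠ i in l, f i r < 0 := fun h => (hlim _).eventually_lt_const h
  refine tendsto_measure_of_forall_sandwich (measure_ne_top _ _) fun ε hε => ?_
  by_cases hpos : ∃ b, 0 ≤ b ∧ 0 < φ b
  · obtain ⟨a, b, ha, hφa, hb, hφb, hgap⟩ := exists_bracket_of_exists_pos μ hφ h0 hpos hμ hε
    refine ⟨Icc 0 a, Ico 0 b, Icc_subset_radialSublevel hφ h0.le ha hφa.le,
      radialSublevel_subset_Ico hφ h0.le hb hφb, hgap, ?_⟩
    filter_upwards [hneg h0, hneg hφa, (hlim b).eventually_const_lt hφb] with i h0i hai hbi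
    exact ⟨Icc_subset_radialSublevel (hf i) h0i.le ha hai.le,
      radialSublevel_subset_Ico (hf i) h0i.le hb hbi⟩
  · simp only [not_exists, not_and, not_lt] at hpos
    obtain ⟨a, ha, hφa, hgap⟩ := exists_bracket_of_forall_nonpos μ hφ h0 hpos hε
    refine ⟨Icc 0 a, Ici 0, Icc_subset_radialSublevel hφ h0.le ha hφa.le, fun _ hr => hr.1,
      hgap, ?_⟩
    filter_upwards [hneg h0, hneg hφa] with i h0i hai
    exact ⟨Icc_subset_radialSublevel (hf i) h0i.le ha hai.le, fun _ hr => hr.1⟩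

theorem radial_prob_continuous_general
    {X : Type*} [NormedAddCommGroup X] {m : ℕ}
    (g : X → EuclideanSpace ℝ (Fin m) → ℝ)
    (hg_lip : LocallyLipschitz fun p : X × EuclideanSpace ℝ (Fin m) => g p.1 p.2)
    (hg_conv : ∀ x, ConvexOn ℝ Set.univ (g x))
    (L : EuclideanSpace ℝ (Fin m) ≃L[ℝ] EuclideanSpace ℝ (Fin m))
    (μη : Measure ℝ) [IsProbabilityMeasure μη]
    (hμ_noatom : ∀ t : ℝ, μη {t} = 0)
    (x : X) (v : EuclideanSpace ℝ (Fin m))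
    (hx0 : g x 0 < 0) :
    ContinuousWithinAt
      (fun p : X × EuclideanSpace ℝ (Fin m) =>
        (μη {r : ℝ | 0 ≤ r ∧ g p.1 (r • L p.2) ≤ 0}).toReal)
      (Set.univ ×ˢ Metric.sphere (0 : EuclideanSpace ℝ (Fin m)) 1) (x, v) := by
  have hslice : ∀ p : X × EuclideanSpace ℝ (Fin m),
      ConvexOn ℝ (Ici 0) fun r : ℝ => g p.1 (r • L p.2) := fun p =>
    ((hg_conv p.1).comp_linearMap (LinearMap.toSpanSingleton ℝ _ (L p.2))).subset
      (subset_univ _) (convex_Ici 0)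
  have hcont : ∀ r : ℝ, Continuous fun p : X × EuclideanSpace ℝ (Fin m) => g p.1 (r • L p.2) :=
    fun r => hg_lip.continuous.comp
      (f := fun p : X × EuclideanSpace ℝ (Fin m) => (p.1, r • L p.2)) (by fun_prop)
  have hlim := tendsto_measure_radialSublevel
    (f := fun (p : X × EuclideanSpace ℝ (Fin m)) r => g p.1 (r • L p.2)) hslice
    (hslice (x, v)) (by simpa using hx0) (fun r => (hcont r).tendsto (x, v)) μη hμ_noatom
  exact ContinuousAt.continuousWithinAt
    ((ENNReal.tendsto_toReal (measure_ne_top _ _)).comp hlim)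

/-- the radial probability function
`e (x, v) = μ_η {r ≥ 0 | g x (r • L v) ≤ 0}` is continuous (relative to
`X × S^{m-1}`) at every `(x, v)` with `g x 0 < 0` and `v` on the unit sphere.
Here `μ_η` is a probability measure concentrated on `[0, ∞)` with no atoms
(e.g. the Chi distribution with `m` degrees of freedom). -/
theorem radial_prob_continuous
    {X : Type*} [NormedAddCommGroup X] [NormedSpace ℝ X] {m : ℕ}
    (g : X → EuclideanSpace ℝ (Fin m) → ℝ)
    (hg_lip : LocallyLipschitz fun p : X × EuclideanSpace ℝ (Fin m) => g p.1 p.2)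
    (hg_conv : ∀ x, ConvexOn ℝ Set.univ (g x))
    (L : EuclideanSpace ℝ (Fin m) ≃L[ℝ] EuclideanSpace ℝ (Fin m))
    (μη : Measure ℝ) [IsProbabilityMeasure μη]
    (hμ_supp : μη (Set.Iio 0) = 0)
    (hμ_noatom : ∀ t : ℝ, μη {t} = 0)
    (x : X) (v : EuclideanSpace ℝ (Fin m))
    (hx0 : g x 0 < 0) (hv : ‖v‖ = 1) :
    ContinuousWithinAt
      (fun p : X × EuclideanSpace ℝ (Fin m) =>
        (μη {r : ℝ | 0 ≤ r ∧ g p.1 (r • L p.2) ≤ 0}).toReal)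
      (Set.univ ×ˢ Metric.sphere (0 : EuclideanSpace ℝ (Fin m)) 1) (x, v) :=
  radial_prob_continuous_general g hg_lip hg_conv L μη hμ_noatom x v hx0
end

section
/- Let x with g(x,0) < 0 and v ∈ F(x), and let M be a Lipschitz constant of y ↦ g(y, ρ(x,v)Lv) near x. Then every Fréchet subgradient y* of the function y ↦ ρ(y,v) at x satisfies ‖y*‖ ≤ M·ρ(x,v)/|g(x,0)|. -/
open Filter

variable {X : Type*} [NormedAddCommGroup X] [NormedSpace ℝ X]

/-- The Fréchet subdifferential of `f : X → ℝ` at `x`: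
`x* ∈ ∂^F f(x)` iff `liminf_{y → x} (f y - f x - ⟨x*, y - x⟩)/‖y - x‖ ≥ 0`,
expressed in `ε`-form. -/
def frechetSubdiff (f : X → ℝ) (x : X) : Set (X →L[ℝ] ℝ) :=
  {p | ∀ ε > (0 : ℝ), ∀ᶠ y in nhds x, -ε * ‖y - x‖ ≤ f y - f x - p (y - x)}

/-- If a continuous linear functional satisfies a one-sided bound
`p (y - x) ≤ K * ‖y - x‖` for all `y` near `x`, then `‖p‖ ≤ K`. -/
lemma opNorm_le_of_eventually_le (p : X →L[ℝ] ℝ) (x : X) {K : ℝ} (hK : 0 ≤ K)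
    (h : ∀ᶠ y in nhds x, p (y - x) ≤ K * ‖y - x‖) : ‖p‖ ≤ K := by
  obtain ⟨δ, hδ, hδ'⟩ := Metric.eventually_nhds_iff.1 h
  have key : ∀ u : X, p u ≤ K * ‖u‖ := by
    intro u
    rcases eq_or_ne u 0 with rfl | hu
    · simp
    · have hnu : (0 : ℝ) < ‖u‖ := norm_pos_iff.2 hu
      set t : ℝ := δ / (2 * ‖u‖) with ht
      have htpos : 0 < t := by positivity
      have hyx : dist (x + t • u) x < δ := by
        rw [dist_eq_norm, add_sub_cancel_left, norm_smul, Real.norm_of_nonneg htpos.le, ht]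
        rw [div_mul_eq_mul_div, div_lt_iff₀ (by positivity)]
        nlinarith
      have := hδ' hyx
      rw [add_sub_cancel_left, map_smul, smul_eq_mul, norm_smul,
        Real.norm_of_nonneg htpos.le] at this
      have h2 : t * p u ≤ t * (K * ‖u‖) := by nlinarith
      exact le_of_mul_le_mul_left h2 htpos
  refine p.opNorm_le_bound hK fun u => ?_
  rw [Real.norm_eq_abs, abs_le]
  constructor
  · have := key (-u)
    simp only [map_neg, norm_neg] at this
    linarith
  · exact key u

set_option maxHeartbeats 1000000 in
/-- bound on Fréchet subgradients of the radius function
`ρ (·, v)` at a point `x` with `g x 0 < 0` and `v ∈ F(x)`: if `M` is a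
Lipschitz constant of `y ↦ g y (ρ x • L v)` near `x`, then every
`y* ∈ ∂^F ρ(·, v)(x)` satisfies `‖y*‖ ≤ M · ρ x / |g x 0|`. -/
theorem frechet_subdiff_radius_bound
    [CompleteSpace X] {m : ℕ}
    (g : X → EuclideanSpace ℝ (Fin m) → ℝ)
    (hg_lip : LocallyLipschitz fun p : X × EuclideanSpace ℝ (Fin m) => g p.1 p.2)
    (hg_conv : ∀ x, ConvexOn ℝ Set.univ (g x))
    (L : EuclideanSpace ℝ (Fin m) ≃L[ℝ] EuclideanSpace ℝ (Fin m))
    (x : X) (v : EuclideanSpace ℝ (Fin m))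
    (hx0 : g x 0 < 0) (hv : ‖v‖ = 1)
    (ρ : X → ℝ)
    (hρ : ∀ᶠ y in nhds x, 0 ≤ ρ y ∧ g y (ρ y • L v) = 0)
    (M : NNReal)
    (hM : ∃ δ > (0 : ℝ), LipschitzOnWith M (fun y => g y (ρ x • L v))
      (Metric.ball x δ)) :
    ∀ p ∈ frechetSubdiff ρ x, ‖p‖ ≤ M * ρ x / |g x 0| := by
  intro p hp
  obtain ⟨hρx0, hgx⟩ := hρ.self_of_nhds
  have hgabs : |g x 0| = -g x 0 := abs_of_neg hx0
  have hgpos : (0 : ℝ) < |g x 0| := abs_pos.2 hx0.ne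
  set C : ℝ := M * ρ x / |g x 0| with hC
  have hC0 : 0 ≤ C := by positivity
  have hCg : C * (-g x 0) = M * ρ x := by
    rw [hC, ← hgabs, div_mul_cancel₀ _ hgpos.ne']
  obtain ⟨δ₀, hδ₀, hLipM⟩ := hM
  -- continuity of the auxiliary function
  have hcont : Continuous fun y : X => -g y 0 - (M : ℝ) * ‖y - x‖ := by
    have h1 : Continuous fun y : X => g y (0 : EuclideanSpace ℝ (Fin m)) :=
      hg_lip.continuous.comp (continuous_id.prodMk continuous_const)
    exact h1.neg.sub (continuous_const.mul ((continuous_id.sub continuous_const).norm))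
  -- key eventual estimate: ρ y - ρ x ≤ (C + ε) ‖y - x‖ near x
  have key : ∀ ε > (0 : ℝ), ∀ᶠ y in nhds x, ρ y - ρ x ≤ (C + ε) * ‖y - x‖ := by
    intro ε hε
    have hball : ∀ᶠ y in nhds x, y ∈ Metric.ball x δ₀ :=
      Metric.isOpen_ball.eventually_mem (Metric.mem_ball_self hδ₀)
    have hpos1 : ∀ᶠ y in nhds x, 0 < -g y 0 - (M : ℝ) * ‖y - x‖ := by
      have hx' : (0 : ℝ) < -g x 0 - (M : ℝ) * ‖x - x‖ := by
        simp only [sub_self, norm_zero, mul_zero, sub_zero]; linarith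
      exact (hcont.tendsto x).eventually (eventually_gt_nhds hx')
    have hpos2 : ∀ᶠ y in nhds x,
        (ρ x : ℝ) * M < (C + ε) * (-g y 0 - (M : ℝ) * ‖y - x‖) := by
      have hcont2 : Continuous fun y : X => (C + ε) * (-g y 0 - (M : ℝ) * ‖y - x‖) :=
        continuous_const.mul hcont
      have hx' : (ρ x : ℝ) * M < (C + ε) * (-g x 0 - (M : ℝ) * ‖x - x‖) := by
        simp only [sub_self, norm_zero, mul_zero, sub_zero]
        nlinarith [mul_pos hε (show (0:ℝ) < -g x 0 by linarith)]
      exact (hcont2.tendsto x).eventually (eventually_gt_nhds hx')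
    filter_upwards [hρ, hball, hpos1, hpos2] with y hy1 hy2 hy3 hy4
    obtain ⟨hρy0, hgy⟩ := hy1
    have hnn : (0 : ℝ) ≤ ‖y - x‖ := norm_nonneg _
    -- Lipschitz bound
    have hlip : |g y (ρ x • L v) - g x (ρ x • L v)| ≤ (M : ℝ) * ‖y - x‖ := by
      have := hLipM.dist_le_mul y hy2 x (Metric.mem_ball_self hδ₀)
      rwa [Real.dist_eq, dist_eq_norm] at this
    have hlow : -((M : ℝ) * ‖y - x‖) ≤ g y (ρ x • L v) := by
      rw [hgx, sub_zero] at hlip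
      have := (abs_le.1 hlip).1
      linarith
    rcases le_or_gt (ρ y) (ρ x) with h | h
    · nlinarith [mul_nonneg (add_nonneg hC0 hε.le) hnn]
    · have hρy : (0 : ℝ) < ρ y := lt_of_le_of_lt hρx0 h
      -- convexity
      have ha : (0 : ℝ) ≤ ρ x / ρ y := div_nonneg hρx0 hρy.le
      have hb : (0 : ℝ) ≤ 1 - ρ x / ρ y := by
        rw [sub_nonneg, div_le_one hρy]; exact h.le
      have hconv := (hg_conv y).2 (Set.mem_univ (ρ y • L v))
        (Set.mem_univ (0 : EuclideanSpace ℝ (Fin m))) ha hb (by ring)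
      rw [smul_zero, add_zero, smul_smul, div_mul_cancel₀ _ hρy.ne'] at hconv
      rw [hgy, smul_zero, zero_add, smul_eq_mul] at hconv
      -- hconv : g y (ρ x • L v) ≤ (1 - ρ x / ρ y) * g y 0
      have h1 : (1 - ρ x / ρ y) * (-g y 0) ≤ (M : ℝ) * ‖y - x‖ := by nlinarith
      have heq : ρ y * ((1 - ρ x / ρ y) * (-g y 0)) = (ρ y - ρ x) * (-g y 0) := by
        field_simp
      have h2 : (ρ y - ρ x) * (-g y 0) ≤ ρ y * ((M : ℝ) * ‖y - x‖) := by
        rw [← heq]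
        exact mul_le_mul_of_nonneg_left h1 hρy.le
      have h3 : (ρ y - ρ x) * (-g y 0 - (M : ℝ) * ‖y - x‖) ≤ ρ x * ((M : ℝ) * ‖y - x‖) := by
        nlinarith
      have h4 : ρ x * ((M : ℝ) * ‖y - x‖) ≤
          (C + ε) * ‖y - x‖ * (-g y 0 - (M : ℝ) * ‖y - x‖) := by
        nlinarith [mul_le_mul_of_nonneg_right hy4.le hnn]
      exact le_of_mul_le_mul_right (by nlinarith) hy3
  -- conclude via the operator norm bound
  have hbound : ∀ ε > (0 : ℝ), ‖p‖ ≤ C + 2 * ε := by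
    intro ε hε
    have hev : ∀ᶠ y in nhds x, p (y - x) ≤ (C + 2 * ε) * ‖y - x‖ := by
      filter_upwards [hp ε hε, key ε hε] with y h1 h2
      nlinarith [norm_nonneg (y - x)]
    exact opNorm_le_of_eventually_le p x (by linarith) hev
  refine le_of_forall_pos_le_add fun ε hε => ?_
  have := hbound (ε / 2) (by linarith)
  linarith
end

section
/- Let x with g(x,0) < 0 and v ∈ F(x). For every Fréchet subgradient y* of e(·,v) at x, one has ‖y*‖ ≤ (ρ(x,v)·χ(ρ(x,v))/|g(x,0)|)·M, where M is a Lipschitz constant of g(·, ρ(x,v)Lv) at x and χ is the Chi density with m degrees of freedom. -/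
open Filter

variable {X : Type*} [NormedAddCommGroup X] [NormedSpace ℝ X]

set_option maxHeartbeats 2000000 in
/-- bound on Fréchet subgradients of the radial probability
function `e (·, v) = F_η (ρ (·, v))` at `x` with `g x 0 < 0` and `v ∈ F(x)`:
every `y* ∈ ∂^F e(·, v)(x)` satisfies
`‖y*‖ ≤ (ρ x · χ(ρ x) / |g x 0|) · M`, where `χ(t) = K t^{m-1} e^{-t²/2}` is
the Chi density and `M` a Lipschitz constant of `g(·, ρ x • L v)` at `x`. -/
theorem frechet_subdiff_radial_prob_bound
    [CompleteSpace X] {m : ℕ}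
    (g : X → EuclideanSpace ℝ (Fin m) → ℝ)
    (hg_lip : LocallyLipschitz fun p : X × EuclideanSpace ℝ (Fin m) => g p.1 p.2)
    (hg_conv : ∀ x, ConvexOn ℝ Set.univ (g x))
    (L : EuclideanSpace ℝ (Fin m) ≃L[ℝ] EuclideanSpace ℝ (Fin m))
    (x : X) (v : EuclideanSpace ℝ (Fin m))
    (hx0 : g x 0 < 0) (hv : ‖v‖ = 1)
    (ρ : X → ℝ)
    (hρ : ∀ᶠ y in nhds x, 0 ≤ ρ y ∧ g y (ρ y • L v) = 0)
    (hρcont : ContinuousAt ρ x)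
    (K : ℝ) (hK : 0 < K)
    (χ : ℝ → ℝ) (hχ : ∀ t, χ t = K * t ^ (m - 1) * Real.exp (-t ^ 2 / 2))
    (Fη : ℝ → ℝ) (hFη : ∀ t, 0 ≤ t → HasDerivAt Fη (χ t) t)
    (hFη_mono : Monotone Fη)
    (M : NNReal)
    (hM : ∃ δ > (0 : ℝ), LipschitzOnWith M (fun y => g y (ρ x • L v))
      (Metric.ball x δ)) :
    ∀ p ∈ frechetSubdiff (fun y => Fη (ρ y)) x,
      ‖p‖ ≤ ρ x * χ (ρ x) / |g x 0| * M := by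
  intro p hp
  obtain ⟨hρx0, hgx⟩ : 0 ≤ ρ x ∧ g x (ρ x • L v) = 0 := hρ.self_of_nhds
  obtain ⟨δM, hδMpos, hLip⟩ := hM
  have hc0pos : (0 : ℝ) < -g x 0 := by linarith
  have habs : |g x 0| = -g x 0 := abs_of_neg hx0
  set a : ℝ := χ (ρ x) with ha
  have hanneg : 0 ≤ a := by
    rw [ha, hχ]
    exact mul_nonneg (mul_nonneg hK.le (pow_nonneg hρx0 _)) (Real.exp_nonneg _)
  set b : ℝ := ρ x * ↑M / (-g x 0) with hb
  have hbnneg : 0 ≤ b := div_nonneg (mul_nonneg hρx0 M.coe_nonneg) hc0pos.le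
  have hT : ρ x * χ (ρ x) / |g x 0| * ↑M = a * b := by rw [habs, ha, hb]; ring
  rw [hT]
  refine le_of_forall_pos_le_add fun ε hε => ?_
  set δ' : ℝ := min 1 (ε / (a + b + 2)) with hδ'def
  have hδ'pos : 0 < δ' := lt_min one_pos (div_pos hε (by linarith))
  have hδ'le1 : δ' ≤ 1 := min_le_left _ _
  have hδ'mul : δ' * (a + b + 2) ≤ ε := by
    rw [← le_div_iff₀ (by linarith : (0:ℝ) < a + b + 2)]
    exact min_le_right _ _
  suffices hkey : ‖p‖ ≤ (a + δ') * (b + δ') + δ' by nlinarith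
  -- continuity facts
  have hgc : Continuous fun y => g y 0 :=
    hg_lip.continuous.comp (continuous_id.prodMk continuous_const)
  have hχc : Continuous χ := by
    have hfn : χ = fun t => K * t ^ (m - 1) * Real.exp (-t ^ 2 / 2) := funext hχ
    rw [hfn]
    exact (continuous_const.mul (continuous_pow _)).mul
      (Real.continuous_exp.comp (by continuity))
  obtain ⟨δχ, hδχpos, hδχ⟩ := Metric.continuousAt_iff.mp (hχc.continuousAt (x := ρ x)) δ' hδ'pos
  -- eventually facts
  have E2 : ∀ᶠ y in nhds x, 0 < -g y 0 :=
    hgc.neg.continuousAt.eventually_const_lt hc0pos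
  have E3 : ∀ᶠ y in nhds x, ρ y * ↑M / (-g y 0) < b + δ' := by
    have hcont : ContinuousAt (fun y => ρ y * ↑M / (-g y 0)) x :=
      (hρcont.mul continuousAt_const).div hgc.continuousAt.neg hc0pos.ne'
    exact hcont.eventually_lt_const (lt_add_of_pos_right _ hδ'pos)
  have E4 : ∀ᶠ y in nhds x, ρ y < ρ x + δχ :=
    hρcont.eventually_lt_const (lt_add_of_pos_right _ hδχpos)
  have E5 : ∀ᶠ y in nhds x, y ∈ Metric.ball x δM :=
    Filter.eventually_iff.mpr (by rw [Set.setOf_mem_eq]; exact Metric.ball_mem_nhds x hδMpos)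
  have E6 := hp δ' hδ'pos
  have main : ∀ᶠ y in nhds x,
      p (y - x) ≤ ((a + δ') * (b + δ') + δ') * ‖y - x‖ := by
    filter_upwards [hρ, E2, E3, E4, E5, E6] with y hy1 hy2 hy3 hy4 hy5 hy6
    obtain ⟨hρy0, hgy⟩ := hy1
    have hr0 : (0:ℝ) ≤ ‖y - x‖ := norm_nonneg _
    have h1 : p (y - x) ≤ Fη (ρ y) - Fη (ρ x) + δ' * ‖y - x‖ := by linarith
    have h2 : Fη (ρ y) - Fη (ρ x) ≤ (a + δ') * ((b + δ') * ‖y - x‖) := by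
      rcases le_or_gt (ρ y) (ρ x) with hle | hlt
      · have hmono := hFη_mono hle
        have : (0:ℝ) ≤ (a + δ') * ((b + δ') * ‖y - x‖) :=
          mul_nonneg (by linarith) (mul_nonneg (by linarith) hr0)
        linarith
      · have hρypos : 0 < ρ y := lt_of_le_of_lt hρx0 hlt
        -- Lipschitz bound: g y (ρ x • L v) ≥ -(M * ‖y - x‖)
        have hlipineq : |g y (ρ x • L v) - g x (ρ x • L v)| ≤ ↑M * ‖y - x‖ := by
          have hd := hLip.dist_le_mul y hy5 x (Metric.mem_ball_self hδMpos)
          rwa [Real.dist_eq, dist_eq_norm] at hd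
        rw [hgx, sub_zero] at hlipineq
        have hgyP : -(↑M * ‖y - x‖) ≤ g y (ρ x • L v) := (abs_le.mp hlipineq).1
        -- convexity bound
        have hs0 : (0:ℝ) ≤ ρ x / ρ y := div_nonneg hρx0 hρypos.le
        have hs1 : ρ x / ρ y ≤ 1 := by
          rw [div_le_one hρypos]; exact hlt.le
        have hpt : (1 - ρ x / ρ y) • (0 : EuclideanSpace ℝ (Fin m)) +
            (ρ x / ρ y) • (ρ y • L v) = ρ x • L v := by
          rw [smul_zero, zero_add, smul_smul, div_mul_cancel₀ _ hρypos.ne']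
        have hconv := (hg_conv y).2 (Set.mem_univ (0 : EuclideanSpace ℝ (Fin m)))
          (Set.mem_univ (ρ y • L v))
          (show (0:ℝ) ≤ 1 - ρ x / ρ y by linarith) hs0
          (show (1 - ρ x / ρ y) + ρ x / ρ y = 1 by ring)
        rw [hpt, hgy, smul_eq_mul, smul_eq_mul, mul_zero, add_zero] at hconv
        -- combine : (1 - ρx/ρy) * (-g y 0) ≤ M * r
        have h5 : (1 - ρ x / ρ y) * (-g y 0) ≤ ↑M * ‖y - x‖ := by nlinarith
        have h5' : (ρ y - ρ x) / ρ y * (-g y 0) ≤ ↑M * ‖y - x‖ := by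
          have heq : (ρ y - ρ x) / ρ y = 1 - ρ x / ρ y := by field_simp
          rw [heq]; exact h5
        have h6 : (ρ y - ρ x) / ρ y ≤ ↑M * ‖y - x‖ / (-g y 0) :=
          (le_div_iff₀ hy2).mpr h5'
        have h7 : ρ y - ρ x ≤ ↑M * ‖y - x‖ / (-g y 0) * ρ y :=
          (div_le_iff₀ hρypos).mp h6
        have h8 : ↑M * ‖y - x‖ / (-g y 0) * ρ y =
            (ρ y * ↑M / (-g y 0)) * ‖y - x‖ := by ring
        have hB : ρ y - ρ x ≤ (b + δ') * ‖y - x‖ := by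
          rw [h8] at h7
          exact h7.trans (mul_le_mul_of_nonneg_right hy3.le hr0)
        -- mean value theorem
        obtain ⟨ξ, hξ, hslope⟩ := exists_hasDerivAt_eq_slope Fη χ hlt
          (fun t ht => (hFη t (hρx0.trans ht.1)).continuousAt.continuousWithinAt)
          (fun t ht => hFη t (hρx0.trans ht.1.le))
        have hder : Fη (ρ y) - Fη (ρ x) = χ ξ * (ρ y - ρ x) := by
          rw [hslope, div_mul_cancel₀ _ (sub_ne_zero.mpr hlt.ne')]
        have hχξ : χ ξ ≤ a + δ' := by
          have hdist : dist ξ (ρ x) < δχ := by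
            rw [Real.dist_eq, abs_of_pos (by linarith [hξ.1] : (0:ℝ) < ξ - ρ x)]
            linarith [hξ.2, hy4]
          have := hδχ hdist
          rw [Real.dist_eq] at this
          have := (abs_lt.mp this).2
          rw [← ha] at this
          linarith
        calc Fη (ρ y) - Fη (ρ x) = χ ξ * (ρ y - ρ x) := hder
          _ ≤ (a + δ') * (ρ y - ρ x) :=
              mul_le_mul_of_nonneg_right hχξ (by linarith)
          _ ≤ (a + δ') * ((b + δ') * ‖y - x‖) :=
              mul_le_mul_of_nonneg_left hB (by linarith)
    have hring : ((a + δ') * (b + δ') + δ') * ‖y - x‖ =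
        (a + δ') * ((b + δ') * ‖y - x‖) + δ' * ‖y - x‖ := by ring
    linarith
  obtain ⟨δ, hδpos, hball⟩ := Metric.eventually_nhds_iff_ball.mp main
  have hC : (0:ℝ) ≤ (a + δ') * (b + δ') + δ' :=
    add_nonneg (mul_nonneg (by linarith) (by linarith)) hδ'pos.le
  refine p.opNorm_le_bound hC fun u => ?_
  rcases eq_or_ne u 0 with rfl | hu
  · simp
  · have hupos : 0 < ‖u‖ := norm_pos_iff.mpr hu
    set t : ℝ := δ / (2 * ‖u‖) with htdef
    have htpos : 0 < t := by positivity
    have key : ∀ w : X, ‖w‖ = ‖u‖ → p w ≤ ((a + δ') * (b + δ') + δ') * ‖u‖ := by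
      intro w hw
      have hts : t * ‖u‖ = δ / 2 := by
        rw [htdef]; field_simp
      have hyb : x + t • w ∈ Metric.ball x δ := by
        rw [Metric.mem_ball, dist_eq_norm, add_sub_cancel_left, norm_smul,
          Real.norm_eq_abs, abs_of_pos htpos, hw, hts]
        linarith
      have hb2 := hball _ hyb
      rw [add_sub_cancel_left, map_smul, smul_eq_mul, norm_smul,
        Real.norm_eq_abs, abs_of_pos htpos, hw] at hb2
      have h9 : t * p w ≤ t * (((a + δ') * (b + δ') + δ') * ‖u‖) := by
        linarith [hb2]
      exact le_of_mul_le_mul_left h9 htpos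
    rw [Real.norm_eq_abs, abs_le]
    constructor
    · have := key (-u) (norm_neg u)
      rw [map_neg] at this
      linarith
    · exact key u rfl
end

section
/- Define φ(t) := (1/√(2π)) ∫_{-∞}^{∞} e^{-s²/2} Φ(1 - t²·e^{h(s)}) ds for t > 0 and φ(t) := Φ(1) for t ≤ 0, where Φ is the standard normal CDF and h(s) = -1 - 4 log(1 - Φ(s)). Then with ε := Φ(1) - Φ(1 - e^{-1}) > 0, for all t ∈ (0,1): φ(0) - φ(t) ≥ ε·√t. In particular, φ is not Lipschitz on any neighborhood of 0. -/
/-- The standard normal cumulative distribution function. -/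
noncomputable def stdNormalCDF (t : ℝ) : ℝ :=
  (Real.sqrt (2 * Real.pi))⁻¹ * ∫ τ in Set.Iic t, Real.exp (-τ ^ 2 / 2)

/-- `h(t) = -1 - 4 log(1 - Φ(t))`. -/
noncomputable def hFun (t : ℝ) : ℝ :=
  -1 - 4 * Real.log (1 - stdNormalCDF t)

/-- The probability function of the counterexample. -/
noncomputable def phiFun (t : ℝ) : ℝ :=
  if t ≤ 0 then stdNormalCDF 1
  else (Real.sqrt (2 * Real.pi))⁻¹ *
    ∫ s : ℝ, Real.exp (-s ^ 2 / 2) * stdNormalCDF (1 - t ^ 2 * Real.exp (hFun s))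

open MeasureTheory Real Set Filter

lemma gint : Integrable (fun s : ℝ => Real.exp (-s ^ 2 / 2)) := by
  have := integrable_exp_neg_mul_sq (by norm_num : (0:ℝ) < 1/2)
  convert this using 2 with x; ring_nf

lemma gval : ∫ s : ℝ, Real.exp (-s ^ 2 / 2) = Real.sqrt (2 * Real.pi) := by
  have := integral_gaussian (1/2 : ℝ)
  rw [show Real.pi / (1/2 : ℝ) = 2 * Real.pi by ring] at this
  rw [← this]; congr 1 with x; ring_nf

lemma cpos : 0 < (Real.sqrt (2 * Real.pi))⁻¹ :=
  inv_pos.2 (Real.sqrt_pos.2 (by positivity))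

lemma cdf_mono : Monotone stdNormalCDF := by
  intro x y hxy
  unfold stdNormalCDF
  apply mul_le_mul_of_nonneg_left _ cpos.le
  exact setIntegral_mono_set gint.integrableOn
      (Eventually.of_forall fun s => (Real.exp_pos _).le)
      (HasSubset.Subset.eventuallyLE (Iic_subset_Iic.2 hxy))

lemma cdf_sub {x y : ℝ} : stdNormalCDF y - stdNormalCDF x =
    (Real.sqrt (2 * Real.pi))⁻¹ * ∫ s in x..y, Real.exp (-s ^ 2 / 2) := by
  unfold stdNormalCDF
  rw [← mul_sub, intervalIntegral.integral_Iic_sub_Iic gint.integrableOn gint.integrableOn]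

lemma cdf_strict {x y : ℝ} (h : x < y) : stdNormalCDF x < stdNormalCDF y := by
  have : 0 < stdNormalCDF y - stdNormalCDF x := by
    rw [cdf_sub]
    apply mul_pos cpos
    apply intervalIntegral.intervalIntegral_pos_of_pos (f := fun s : ℝ => Real.exp (-s ^ 2 / 2))
      gint.intervalIntegrable (fun s => Real.exp_pos _) h
  linarith

lemma cdf_nonneg (x : ℝ) : 0 ≤ stdNormalCDF x :=
  mul_nonneg cpos.le (integral_nonneg fun s => (Real.exp_pos _).le)

lemma cdf_le_one (x : ℝ) : stdNormalCDF x ≤ 1 := by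
  unfold stdNormalCDF
  have h1 : ∫ τ in Set.Iic x, Real.exp (-τ ^ 2 / 2) ≤ Real.sqrt (2 * Real.pi) := by
    rw [← gval]
    exact setIntegral_le_integral gint (Eventually.of_forall fun s => (Real.exp_pos _).le)
  calc (Real.sqrt (2 * Real.pi))⁻¹ * ∫ τ in Set.Iic x, Real.exp (-τ ^ 2 / 2)
      ≤ (Real.sqrt (2 * Real.pi))⁻¹ * Real.sqrt (2 * Real.pi) := by
        exact mul_le_mul_of_nonneg_left h1 cpos.le
    _ = 1 := inv_mul_cancel₀ (by positivity)

lemma cdf_lt_one (x : ℝ) : stdNormalCDF x < 1 := by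
  have key : stdNormalCDF x + (Real.sqrt (2 * Real.pi))⁻¹ * ∫ s in Set.Ioi x, Real.exp (-s ^ 2 / 2) = 1 := by
    unfold stdNormalCDF
    rw [← mul_add]
    rw [intervalIntegral.integral_Iic_add_Ioi gint.integrableOn gint.integrableOn, gval]
    exact inv_mul_cancel₀ (by positivity)
  have hpos : 0 < ∫ s in Set.Ioi x, Real.exp (-s ^ 2 / 2) := by
    rw [setIntegral_pos_iff_support_of_nonneg_ae
      (Eventually.of_forall fun s => (Real.exp_pos _).le) gint.integrableOn]
    have : Function.support (fun s : ℝ => Real.exp (-s ^ 2 / 2)) = Set.univ := by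
      ext s; simp [Function.support, (Real.exp_pos _).ne']
    rw [this]
    simp [Real.volume_Ioi]
  nlinarith [cpos]

lemma cdf_ioi (x : ℝ) :
    (Real.sqrt (2 * Real.pi))⁻¹ * ∫ s in Set.Ioi x, Real.exp (-s ^ 2 / 2) = 1 - stdNormalCDF x := by
  unfold stdNormalCDF
  rw [eq_sub_iff_add_eq, ← mul_add, add_comm,
    intervalIntegral.integral_Iic_add_Ioi gint.integrableOn gint.integrableOn, gval]
  exact inv_mul_cancel₀ (by positivity)

lemma cdf_continuous : Continuous stdNormalCDF := by
  have h : ∀ x, stdNormalCDF x = (Real.sqrt (2 * Real.pi))⁻¹ *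
      ((∫ τ in Set.Iic (0:ℝ), Real.exp (-τ ^ 2 / 2)) + ∫ s in (0:ℝ)..x, Real.exp (-s ^ 2 / 2)) := by
    intro x
    unfold stdNormalCDF
    rw [← intervalIntegral.integral_Iic_sub_Iic gint.integrableOn gint.integrableOn]
    ring
  simp only [funext h]
  exact continuous_const.mul (continuous_const.add
    (intervalIntegral.continuous_primitive (fun a b => gint.intervalIntegrable) 0))

lemma cdf_tendsto_atTop : Tendsto stdNormalCDF atTop (nhds 1) := by
  have h := (MeasureTheory.aecover_Iic (tendsto_id (α := ℝ))).integral_tendsto_of_countably_generated gint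
  rw [gval] at h
  have := h.const_mul (Real.sqrt (2 * Real.pi))⁻¹
  rw [inv_mul_cancel₀ (by positivity : Real.sqrt (2 * Real.pi) ≠ 0)] at this
  exact this

lemma cdf_tendsto_atBot : Tendsto stdNormalCDF atBot (nhds 0) := by
  have h := (MeasureTheory.aecover_Ioi (tendsto_id (α := ℝ))).integral_tendsto_of_countably_generated gint
  rw [gval] at h
  have h2 := h.const_mul (Real.sqrt (2 * Real.pi))⁻¹
  rw [inv_mul_cancel₀ (by positivity : Real.sqrt (2 * Real.pi) ≠ 0)] at h2
  have : stdNormalCDF = fun x => 1 - (Real.sqrt (2 * Real.pi))⁻¹ * ∫ s in Set.Ioi x, Real.exp (-s ^ 2 / 2) := by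
    ext x; rw [cdf_ioi]; ring
  rw [this]
  simpa using (tendsto_const_nhds (x := (1:ℝ))).sub h2

lemma cdf_surj {c : ℝ} (h0 : 0 < c) (h1 : c < 1) : ∃ a, stdNormalCDF a = c := by
  obtain ⟨x₂, hx₂⟩ := (cdf_tendsto_atTop.eventually (eventually_gt_nhds h1)).exists
  obtain ⟨x₁, hx₁⟩ := (cdf_tendsto_atBot.eventually (eventually_lt_nhds h0)).exists
  have hle : x₁ ≤ x₂ := by
    by_contra hlt
    exact absurd (cdf_mono (le_of_not_ge hlt)) (by linarith)
  obtain ⟨a, _, ha⟩ := intermediate_value_Icc hle cdf_continuous.continuousOn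
    ⟨hx₁.le, hx₂.le⟩
  exact ⟨a, ha⟩


lemma eps_pos : 0 < stdNormalCDF 1 - stdNormalCDF (1 - Real.exp (-1)) := by
  have := cdf_strict (x := 1 - Real.exp (-1)) (y := 1) (by nlinarith [Real.exp_pos (-1:ℝ)])
  linarith

lemma meas_g (t : ℝ) :
    Measurable (fun s : ℝ => Real.exp (-s ^ 2 / 2) * stdNormalCDF (1 - t ^ 2 * Real.exp (hFun s))) := by
  have mh : Measurable hFun := by
    unfold hFun
    exact measurable_const.sub
      ((Real.measurable_log.comp (measurable_const.sub cdf_continuous.measurable)).const_mul 4)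
  exact (Real.measurable_exp.comp ((measurable_id.pow_const 2).neg.div_const 2)).mul
    (cdf_continuous.measurable.comp
      (measurable_const.sub ((Real.measurable_exp.comp mh).const_mul (t ^ 2))))

lemma int_g (t : ℝ) :
    Integrable (fun s : ℝ => Real.exp (-s ^ 2 / 2) * stdNormalCDF (1 - t ^ 2 * Real.exp (hFun s))) := by
  refine gint.mono (meas_g t).aestronglyMeasurable (Eventually.of_forall fun s => ?_)
  rw [Real.norm_eq_abs, Real.norm_eq_abs, abs_of_nonneg (Real.exp_pos _).le,
    abs_of_nonneg (mul_nonneg (Real.exp_pos _).le (cdf_nonneg _))]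
  calc Real.exp (-s ^ 2 / 2) * stdNormalCDF (1 - t ^ 2 * Real.exp (hFun s))
      ≤ Real.exp (-s ^ 2 / 2) * 1 := by
        exact mul_le_mul_of_nonneg_left (cdf_le_one _) (Real.exp_pos _).le
    _ = Real.exp (-s ^ 2 / 2) := mul_one _

lemma key_ineq : ∀ t ∈ Set.Ioo (0 : ℝ) 1,
    (stdNormalCDF 1 - stdNormalCDF (1 - Real.exp (-1))) * Real.sqrt t ≤
      phiFun 0 - phiFun t := by
  intro t ⟨ht0, ht1⟩
  set c := (Real.sqrt (2 * Real.pi))⁻¹ with hc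
  set ε := stdNormalCDF 1 - stdNormalCDF (1 - Real.exp (-1)) with hε
  set f := fun s : ℝ => Real.exp (-s ^ 2 / 2) with hf
  set g := fun s : ℝ => Real.exp (-s ^ 2 / 2) * stdNormalCDF (1 - t ^ 2 * Real.exp (hFun s)) with hg
  have hst0 : 0 < Real.sqrt t := Real.sqrt_pos.2 ht0
  have hst1 : Real.sqrt t < 1 := by
    rw [show (1:ℝ) = Real.sqrt 1 by simp]
    exact Real.sqrt_lt_sqrt ht0.le ht1
  obtain ⟨a, ha⟩ := cdf_surj (c := 1 - Real.sqrt t) (by linarith) (by linarith)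
  have hcs : c * Real.sqrt (2 * Real.pi) = 1 := inv_mul_cancel₀ (by positivity)
  -- rewrite φ0 - φt
  have hphi0 : phiFun 0 = stdNormalCDF 1 := if_pos le_rfl
  have hphit : phiFun t = c * ∫ s : ℝ, g s := if_neg (not_le.2 ht0)
  have hFint : Integrable (fun s => f s * stdNormalCDF 1 - g s) :=
    (gint.mul_const _).sub (int_g t)
  have hsub : phiFun 0 - phiFun t = c * ∫ s : ℝ, (f s * stdNormalCDF 1 - g s) := by
    rw [hphi0, hphit, integral_sub (gint.mul_const _) (int_g t), integral_mul_const,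
      gval, mul_sub, ← mul_assoc, hcs, one_mul]
  rw [hsub]
  -- nonnegativity of the integrand
  have hFnn : ∀ s : ℝ, 0 ≤ f s * stdNormalCDF 1 - g s := by
    intro s
    have h1 : stdNormalCDF (1 - t ^ 2 * Real.exp (hFun s)) ≤ stdNormalCDF 1 := by
      apply cdf_mono
      nlinarith [Real.exp_pos (hFun s), sq_nonneg t]
    have := mul_le_mul_of_nonneg_left h1 (Real.exp_pos (-s ^ 2 / 2)).le
    simpa [hf, hg] using by linarith
  -- pointwise bound on Ioi a
  have hpt : ∀ s ∈ Set.Ioi a, f s * ε ≤ f s * stdNormalCDF 1 - g s := by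
    intro s hs
    have hΦs : 1 - Real.sqrt t ≤ stdNormalCDF s := ha ▸ cdf_mono (le_of_lt hs)
    have hΦlt : stdNormalCDF s < 1 := cdf_lt_one s
    have hlog : Real.log (1 - stdNormalCDF s) ≤ Real.log (Real.sqrt t) :=
      Real.log_le_log (by linarith) (by linarith)
    have hlogs : Real.log (Real.sqrt t) = Real.log t / 2 := Real.log_sqrt ht0.le
    have hh : -1 - 2 * Real.log t ≤ hFun s := by
      unfold hFun; rw [hlogs] at hlog; linarith
    have hexp : Real.exp (-1) / t ^ 2 ≤ Real.exp (hFun s) := by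
      have : Real.exp (-1 - 2 * Real.log t) ≤ Real.exp (hFun s) := Real.exp_le_exp.2 hh
      have he : Real.exp (-1 - 2 * Real.log t) = Real.exp (-1) / t ^ 2 := by
        rw [Real.exp_sub, show (2 : ℝ) * Real.log t = (2 : ℕ) * Real.log t by norm_num,
          Real.exp_nat_mul, Real.exp_log ht0]
      linarith [he ▸ this]
    have ht2 : Real.exp (-1) ≤ t ^ 2 * Real.exp (hFun s) := by
      have := mul_le_mul_of_nonneg_left hexp (sq_nonneg t)
      rw [mul_div_cancel₀ _ (by positivity : (t:ℝ) ^ 2 ≠ 0)] at this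
      linarith
    have hΦ2 : stdNormalCDF (1 - t ^ 2 * Real.exp (hFun s)) ≤ stdNormalCDF (1 - Real.exp (-1)) :=
      cdf_mono (by linarith)
    have := mul_le_mul_of_nonneg_left hΦ2 (Real.exp_pos (-s ^ 2 / 2)).le
    simp only [hf, hg, hε]
    nlinarith [Real.exp_pos (-s ^ 2 / 2)]
  -- chain of inequalities
  have step1 : ∫ s in Set.Ioi a, (f s * stdNormalCDF 1 - g s) ≤
      ∫ s : ℝ, (f s * stdNormalCDF 1 - g s) :=
    setIntegral_le_integral hFint (Eventually.of_forall hFnn)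
  have step2 : ∫ s in Set.Ioi a, f s * ε ≤ ∫ s in Set.Ioi a, (f s * stdNormalCDF 1 - g s) :=
    setIntegral_mono_on ((gint.mul_const _).integrableOn) hFint.integrableOn
      measurableSet_Ioi hpt
  have step3 : ∫ s in Set.Ioi a, f s * ε = (∫ s in Set.Ioi a, f s) * ε := integral_mul_const _ _
  have step4 : c * ∫ s in Set.Ioi a, f s = Real.sqrt t := by
    rw [hf, cdf_ioi, ha]; ring
  calc ε * Real.sqrt t = (c * ∫ s in Set.Ioi a, f s) * ε := by rw [step4]; ring
    _ = c * ∫ s in Set.Ioi a, f s * ε := by rw [step3]; ring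
    _ ≤ c * ∫ s in Set.Ioi a, (f s * stdNormalCDF 1 - g s) :=
        mul_le_mul_of_nonneg_left step2 cpos.le
    _ ≤ c * ∫ s : ℝ, (f s * stdNormalCDF 1 - g s) :=
        mul_le_mul_of_nonneg_left step1 cpos.le

/-- with `ε := Φ(1) - Φ(1 - e⁻¹) > 0`, for all `t ∈ (0,1)` one
has `φ(0) - φ(t) ≥ ε √t`; in particular, `φ` is not Lipschitz on any
neighborhood of `0`. -/
theorem phiFun_not_lipschitz :
    0 < stdNormalCDF 1 - stdNormalCDF (1 - Real.exp (-1)) ∧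
    (∀ t ∈ Set.Ioo (0 : ℝ) 1,
      (stdNormalCDF 1 - stdNormalCDF (1 - Real.exp (-1))) * Real.sqrt t ≤
        phiFun 0 - phiFun t) ∧
    ∀ (K : NNReal) (δ : ℝ), 0 < δ →
      ¬ LipschitzOnWith K phiFun (Metric.ball (0 : ℝ) δ) := by
  refine ⟨eps_pos, key_ineq, ?_⟩
  intro K δ hδ hlip
  set ε := stdNormalCDF 1 - stdNormalCDF (1 - Real.exp (-1)) with hε
  have hεpos : 0 < ε := eps_pos
  have hK1 : (0:ℝ) < (K:ℝ) + 1 := by positivity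
  set m := min δ (min 1 ((ε / ((K:ℝ) + 1)) ^ 2)) with hm
  have hmpos : 0 < m := lt_min hδ (lt_min one_pos (by positivity))
  set t := m / 2 with ht
  have ht0 : 0 < t := by positivity
  have htδ : t < δ := by
    have : m ≤ δ := min_le_left _ _
    linarith
  have ht1 : t < 1 := by
    have : m ≤ 1 := (min_le_right _ _).trans (min_le_left _ _)
    linarith
  have htsq : t < (ε / ((K:ℝ) + 1)) ^ 2 := by
    have : m ≤ (ε / ((K:ℝ) + 1)) ^ 2 := (min_le_right _ _).trans (min_le_right _ _)
    linarith
  have hst : Real.sqrt t < ε / ((K:ℝ) + 1) := by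
    have h1 := Real.sqrt_lt_sqrt ht0.le htsq
    rwa [Real.sqrt_sq (by positivity)] at h1
  have hstpos : 0 < Real.sqrt t := Real.sqrt_pos.2 ht0
  have hmem0 : (0:ℝ) ∈ Metric.ball (0:ℝ) δ := by simpa using hδ
  have hmemt : t ∈ Metric.ball (0:ℝ) δ := by
    simp only [Metric.mem_ball, Real.dist_eq, sub_zero, abs_of_pos ht0]
    exact htδ
  have hd := hlip.dist_le_mul 0 hmem0 t hmemt
  rw [Real.dist_eq, Real.dist_eq, zero_sub, abs_neg, abs_of_pos ht0] at hd
  have h2 := key_ineq t ⟨ht0, ht1⟩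
  have habs : phiFun 0 - phiFun t ≤ |phiFun 0 - phiFun t| := le_abs_self _
  have hKε : ((K:ℝ) + 1) * Real.sqrt t < ε := by nlinarith [(lt_div_iff₀ hK1).mp hst]
  have hts : Real.sqrt t * Real.sqrt t = t := Real.mul_self_sqrt ht0.le
  nlinarith [hstpos, NNReal.coe_nonneg K]
end

section
/- Let f : X → ℝ be locally Lipschitz near x̄ with Lipschitz constant M on a neighborhood of x̄, and suppose that for some w ∈ X and sequences t_n ↓ 0 one can find x_n* ∈ ∂^C f(x̄ + τ_n t_n w) (Clarke subdifferential, τ_n ∈ [0,1]) with f(x̄) - f(x̄ + t_n w) ≤ -t_n ⟨x_n*, w⟩ (Lebourg mean value inequality). Then every weak* cluster point x* of (x_n*) belongs to ∂^C f(x̄) and satisfies f(x̄) - f(x̄ + t_n w) ≤ -t_n⟨x*, w⟩ + o(t_n) along a subsequence. In particular (Lebourg's mean value theorem, finite-dimensional case): for f : ℝ^n → ℝ locally Lipschitz and points a, b, there exist τ ∈ (0,1) and x* ∈ ∂^C f(a + τ(b-a)) with f(b) - f(a) = ⟨x*, b - a⟩. -/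
open Filter

/-- Clarke's generalized directional derivative
`f°(x; h) = limsup_{y → x, t ↓ 0} (f(y + t h) - f(y))/t`. -/
noncomputable def clarkeDeriv {X : Type*} [NormedAddCommGroup X]
    [NormedSpace ℝ X] (f : X → ℝ) (x : X) (h : X) : ℝ :=
  Filter.limsup (fun p : X × ℝ => (f (p.1 + p.2 • h) - f p.1) / p.2)
    ((nhds x) ×ˢ (nhdsWithin (0 : ℝ) (Set.Ioi 0)))

/-- Clarke's subdifferential of a locally Lipschitz function:
`∂^C f(x) = {x* | ⟨x*, h⟩ ≤ f°(x; h) for all h}`. -/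
def clarkeSubdiff {X : Type*} [NormedAddCommGroup X] [NormedSpace ℝ X]
    (f : X → ℝ) (x : X) : Set (X →L[ℝ] ℝ) :=
  {p | ∀ h, p h ≤ clarkeDeriv f x h}

/-!
On the segment, `g t = f (a + t • (b - a)) - t * (f b - f a)` takes the same value at `0` and `1`,
so it has a local extremum at some `τ ∈ (0, 1)`. Put `x = a + τ • (b - a)`. At a minimum the
difference quotients of `f` based at `x` in direction `b - a` are eventually at least
`f b - f a`; at a maximum the same holds for the quotients based at `x - t • (b - a)`. Either way
`f b - f a ≤ f°(x; b - a)`, and applying this to `t ↦ g (-t)` gives `f a - f b ≤ f°(x; a - b)`.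
Near `x`, `f` is `K`-Lipschitz, so `f°(x; ·)` is sublinear and bounded by `K ‖·‖`. Hahn–Banach
therefore extends `c • (b - a) ↦ c * (f b - f a)` to a linear functional dominated by
`f°(x; ·)`. That functional is continuous, so it lies in `∂^C f(x)`.
-/

open Topology
open scoped NNReal

section ClarkeFilter

variable {X : Type*} [TopologicalSpace X]

def clarkeFilter (x : X) : Filter (X × ℝ) := 𝓝 x ×ˢ 𝓝[>] 0

instance (x : X) : (clarkeFilter x).NeBot := by
  unfold clarkeFilter; infer_instance

theorem tendsto_clarkeFilter_mul {c : ℝ} (hc : 0 < c) (x : X) :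
    Tendsto (fun p : X × ℝ => (p.1, c * p.2)) (clarkeFilter x) (clarkeFilter x) := by
  have hmul : Tendsto (c * ·) (𝓝[>] (0 : ℝ)) (𝓝[>] 0) :=
    tendsto_nhdsWithin_of_tendsto_nhds_of_eventually_within _
      (((continuous_const_mul c).tendsto' 0 0 (mul_zero c)).mono_left nhdsWithin_le_nhds)
      (eventually_nhdsWithin_of_forall fun t ht => mul_pos hc ht)
  exact tendsto_fst.prodMk (hmul.comp tendsto_snd)

end ClarkeFilter

section ClarkeDeriv

variable {X : Type*} [NormedAddCommGroup X] [NormedSpace ℝ X]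

noncomputable def diffQuot (f : X → ℝ) (v : X) (p : X × ℝ) : ℝ :=
  (f (p.1 + p.2 • v) - f p.1) / p.2

theorem clarkeDeriv_eq_limsup (f : X → ℝ) (x v : X) :
    clarkeDeriv f x v = limsup (diffQuot f v) (clarkeFilter x) := rfl

theorem clarkeDeriv_zero (f : X → ℝ) (x : X) : clarkeDeriv f x 0 = 0 := by
  have : diffQuot f (0 : X) = fun _ => 0 := by
    funext p; simp [diffQuot]
  rw [clarkeDeriv_eq_limsup, this, limsup_const]

theorem tendsto_clarkeFilter_add_smul (x v : X) :
    Tendsto (fun p : X × ℝ => (p.1 + p.2 • v, p.2)) (clarkeFilter x) (clarkeFilter x) := by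
  unfold clarkeFilter
  refine Tendsto.prodMk ?_ tendsto_snd
  have ht : Tendsto (fun p : X × ℝ => p.2) (𝓝 x ×ˢ 𝓝[>] 0) (𝓝 0) :=
    tendsto_snd.mono_right nhdsWithin_le_nhds
  simpa using tendsto_fst.add (ht.smul_const v)

variable {f : X → ℝ} {x : X} {K : ℝ≥0} {U : Set X}

theorem eventually_abs_diffQuot_le (hU : U ∈ 𝓝 x) (hf : LipschitzOnWith K f U) (v : X) :
    ∀ᶠ p in clarkeFilter x, |diffQuot f v p| ≤ K * ‖v‖ := by
  have hbase : ∀ᶠ p in clarkeFilter x, p.1 ∈ U := tendsto_fst.eventually hU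
  have hshift : ∀ᶠ p in clarkeFilter x, p.1 + p.2 • v ∈ U :=
    (tendsto_fst.comp (tendsto_clarkeFilter_add_smul x v)).eventually hU
  have hpos : ∀ᶠ p in clarkeFilter x, 0 < p.2 := tendsto_snd.eventually self_mem_nhdsWithin
  filter_upwards [hbase, hshift, hpos] with p hp₁ hp₂ ht
  have hlip := hf.dist_le_mul _ hp₂ _ hp₁
  rw [Real.dist_eq, dist_eq_norm, add_sub_cancel_left, norm_smul, Real.norm_of_nonneg ht.le]
    at hlip
  rw [diffQuot, abs_div, abs_of_pos ht, div_le_iff₀ ht]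
  linarith

theorem isBoundedUnder_le_diffQuot_comp (hU : U ∈ 𝓝 x) (hf : LipschitzOnWith K f U) (v : X)
    {ι : Type*} {l : Filter ι} {m : ι → X × ℝ} (hm : Tendsto m l (clarkeFilter x)) :
    IsBoundedUnder (· ≤ ·) l (diffQuot f v ∘ m) :=
  isBoundedUnder_of_eventually_le <|
    (hm.eventually (eventually_abs_diffQuot_le hU hf v)).mono fun _ h => (abs_le.1 h).2

theorem isBoundedUnder_ge_diffQuot_comp (hU : U ∈ 𝓝 x) (hf : LipschitzOnWith K f U) (v : X)
    {ι : Type*} {l : Filter ι} {m : ι → X × ℝ} (hm : Tendsto m l (clarkeFilter x)) :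
    IsBoundedUnder (· ≥ ·) l (diffQuot f v ∘ m) :=
  isBoundedUnder_of_eventually_ge <|
    (hm.eventually (eventually_abs_diffQuot_le hU hf v)).mono fun _ h => (abs_le.1 h).1

theorem clarkeDeriv_le_mul_norm (hU : U ∈ 𝓝 x) (hf : LipschitzOnWith K f U) (v : X) :
    clarkeDeriv f x v ≤ K * ‖v‖ :=
  limsup_le_of_le (isBoundedUnder_ge_diffQuot_comp hU hf v tendsto_id).isCoboundedUnder_le <|
    (eventually_abs_diffQuot_le hU hf v).mono fun _ h => (abs_le.1 h).2

theorem le_clarkeDeriv_of_frequently (hU : U ∈ 𝓝 x) (hf : LipschitzOnWith K f U) {v : X} {c : ℝ}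
    (h : ∃ᶠ p in clarkeFilter x, c ≤ diffQuot f v p) : c ≤ clarkeDeriv f x v :=
  le_limsup_of_frequently_le h (isBoundedUnder_le_diffQuot_comp hU hf v tendsto_id)

theorem limsup_diffQuot_comp_le (hU : U ∈ 𝓝 x) (hf : LipschitzOnWith K f U) (v : X)
    {m : X × ℝ → X × ℝ} (hm : Tendsto m (clarkeFilter x) (clarkeFilter x)) :
    limsup (diffQuot f v ∘ m) (clarkeFilter x) ≤ clarkeDeriv f x v := by
  rw [limsup_comp, clarkeDeriv_eq_limsup]
  exact limsup_le_limsup_of_le hm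
    (isBoundedUnder_ge_diffQuot_comp hU hf v (tendsto_map' hm)).isCoboundedUnder_le
    (isBoundedUnder_le_diffQuot_comp hU hf v tendsto_id)

theorem clarkeDeriv_add_le (hU : U ∈ 𝓝 x) (hf : LipschitzOnWith K f U) (u v : X) :
    clarkeDeriv f x (u + v) ≤ clarkeDeriv f x u + clarkeDeriv f x v := by
  set m : X × ℝ → X × ℝ := fun p => (p.1 + p.2 • v, p.2)
  have hm : Tendsto m (clarkeFilter x) (clarkeFilter x) := tendsto_clarkeFilter_add_smul x v
  have hsplit : diffQuot f (u + v) = diffQuot f u ∘ m + diffQuot f v := by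
    funext p
    simp only [diffQuot, m, Function.comp_apply, Pi.add_apply, ← add_div, smul_add, add_assoc,
      add_comm (p.2 • u)]
    ring_nf
  calc clarkeDeriv f x (u + v)
      = limsup (diffQuot f u ∘ m + diffQuot f v) (clarkeFilter x) := by
        rw [clarkeDeriv_eq_limsup, hsplit]
    _ ≤ limsup (diffQuot f u ∘ m) (clarkeFilter x) + clarkeDeriv f x v :=
        limsup_add_le (isBoundedUnder_ge_diffQuot_comp hU hf u hm)
          (isBoundedUnder_le_diffQuot_comp hU hf u hm)
          (isBoundedUnder_ge_diffQuot_comp hU hf v tendsto_id).isCoboundedUnder_le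
          (isBoundedUnder_le_diffQuot_comp hU hf v tendsto_id)
    _ ≤ clarkeDeriv f x u + clarkeDeriv f x v := by
        gcongr; exact limsup_diffQuot_comp_le hU hf u hm

theorem clarkeDeriv_smul_le (hU : U ∈ 𝓝 x) (hf : LipschitzOnWith K f U) {c : ℝ} (hc : 0 < c)
    (v : X) : clarkeDeriv f x (c • v) ≤ c * clarkeDeriv f x v := by
  set m : X × ℝ → X × ℝ := fun p => (p.1, c * p.2)
  have hm : Tendsto m (clarkeFilter x) (clarkeFilter x) := tendsto_clarkeFilter_mul hc x
  have hrescale : diffQuot f (c • v) = (c * ·) ∘ (diffQuot f v ∘ m) := by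
    funext p
    rcases eq_or_ne p.2 0 with h | h
    · simp [diffQuot, m, h]
    · simp only [diffQuot, m, Function.comp_apply, smul_smul, mul_comm p.2]
      field_simp
  rw [clarkeDeriv_eq_limsup, hrescale,
    ← Monotone.map_limsup_of_continuousAt (fun _ _ h => mul_le_mul_of_nonneg_left h hc.le) _
      (continuous_const_mul c).continuousAt (isBoundedUnder_le_diffQuot_comp hU hf v hm)
      (isBoundedUnder_ge_diffQuot_comp hU hf v hm).isCoboundedUnder_le]
  exact mul_le_mul_of_nonneg_left (limsup_diffQuot_comp_le hU hf v hm) hc.le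

theorem clarkeDeriv_smul (hU : U ∈ 𝓝 x) (hf : LipschitzOnWith K f U) {c : ℝ} (hc : 0 < c)
    (v : X) : clarkeDeriv f x (c • v) = c * clarkeDeriv f x v := by
  refine le_antisymm (clarkeDeriv_smul_le hU hf hc v) ?_
  have h := clarkeDeriv_smul_le hU hf (inv_pos.2 hc) (c • v)
  rw [inv_smul_smul₀ hc.ne'] at h
  calc c * clarkeDeriv f x v ≤ c * (c⁻¹ * clarkeDeriv f x (c • v)) := by gcongr
    _ = clarkeDeriv f x (c • v) := by field_simp

end ClarkeDeriv

section ClarkeSubdiff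

variable {X : Type*} [NormedAddCommGroup X] [NormedSpace ℝ X]
  {f : X → ℝ} {x : X} {K : ℝ≥0} {U : Set X}

theorem mul_le_clarkeDeriv_smul (hU : U ∈ 𝓝 x) (hf : LipschitzOnWith K f U) {v : X} {s : ℝ}
    (hv : s ≤ clarkeDeriv f x v) (hnv : -s ≤ clarkeDeriv f x (-v)) (c : ℝ) :
    c * s ≤ clarkeDeriv f x (c • v) := by
  rcases lt_trichotomy c 0 with hc | rfl | hc
  · calc c * s = -c * -s := by ring
      _ ≤ -c * clarkeDeriv f x (-v) := by gcongr; linarith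
      _ = clarkeDeriv f x (c • v) := by
        rw [← clarkeDeriv_smul hU hf (neg_pos.2 hc), smul_neg, neg_smul, neg_neg]
  · simp [clarkeDeriv_zero]
  · calc c * s ≤ c * clarkeDeriv f x v := by gcongr
      _ = clarkeDeriv f x (c • v) := (clarkeDeriv_smul hU hf hc v).symm

theorem exists_mem_clarkeSubdiff_apply_eq (hU : U ∈ 𝓝 x) (hf : LipschitzOnWith K f U)
    {v : X} {s : ℝ} (hv : s ≤ clarkeDeriv f x v) (hnv : -s ≤ clarkeDeriv f x (-v)) :
    ∃ p ∈ clarkeSubdiff f x, p v = s := by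
  have hdom := mul_le_clarkeDeriv_smul hU hf hv hnv
  have hwd : ∀ c : ℝ, c • v = 0 → c • s = 0 := by
    intro c hcv
    have h₁ := hdom c
    have h₂ := hdom (-c)
    rw [hcv, clarkeDeriv_zero] at h₁
    rw [neg_smul, hcv, neg_zero, clarkeDeriv_zero] at h₂
    rw [smul_eq_mul]
    linarith
  obtain ⟨g, hgφ, hg⟩ := exists_extension_of_le_sublinear
    (LinearPMap.mkSpanSingleton' v s hwd) (clarkeDeriv f x)
    (fun c hc => clarkeDeriv_smul hU hf hc) (clarkeDeriv_add_le hU hf) (by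
      rintro ⟨_, hz⟩
      obtain ⟨c, rfl⟩ := Submodule.mem_span_singleton.1 hz
      rw [LinearPMap.mkSpanSingleton'_apply, smul_eq_mul]
      exact hdom c)
  have hbound : ∀ y, ‖g y‖ ≤ K * ‖y‖ := by
    intro y
    have hlow := (hg (-y)).trans (clarkeDeriv_le_mul_norm hU hf (-y))
    rw [map_neg, norm_neg] at hlow
    rw [Real.norm_eq_abs, abs_le]
    exact ⟨by linarith, (hg y).trans (clarkeDeriv_le_mul_norm hU hf y)⟩
  refine ⟨g.mkContinuous K hbound, hg, ?_⟩
  rw [LinearMap.mkContinuous_apply, hgφ ⟨v, Submodule.mem_span_singleton_self v⟩]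
  exact LinearPMap.mkSpanSingleton'_apply_self v s hwd _

variable {a v : X} {s τ : ℝ}

theorem le_clarkeDeriv_of_isLocalExtr (hU : U ∈ 𝓝 (a + τ • v)) (hf : LipschitzOnWith K f U)
    (hext : IsLocalExtr (fun t => f (a + t • v) - t * s) τ) :
    s ≤ clarkeDeriv f (a + τ • v) v := by
  have hpos : ∀ᶠ t : ℝ in 𝓝[>] 0, 0 < t := self_mem_nhdsWithin
  have hnhds : Tendsto (fun t : ℝ => t) (𝓝[>] 0) (𝓝 0) := nhdsWithin_le_nhds
  refine le_clarkeDeriv_of_frequently hU hf ?_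
  rcases hext with hmin | hmax
  · have hm : Tendsto (fun t : ℝ => (a + τ • v, t)) (𝓝[>] 0) (clarkeFilter (a + τ • v)) :=
      tendsto_const_nhds.prodMk tendsto_id
    have hτ : Tendsto (fun t : ℝ => τ + t) (𝓝[>] 0) (𝓝 τ) := by
      simpa using tendsto_const_nhds.add hnhds
    refine hm.frequently (Eventually.frequently ?_)
    filter_upwards [hτ.eventually hmin, hpos] with t hmin ht
    rw [diffQuot, le_div_iff₀ ht]
    rw [add_smul, ← add_assoc] at hmin
    linarith
  · have hm : Tendsto (fun t : ℝ => (a + τ • v - t • v, t)) (𝓝[>] 0) (clarkeFilter (a + τ • v)) :=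
      Tendsto.prodMk (by simpa using tendsto_const_nhds.sub (hnhds.smul_const v)) tendsto_id
    have hτ : Tendsto (fun t : ℝ => τ - t) (𝓝[>] 0) (𝓝 τ) := by
      simpa using tendsto_const_nhds.sub hnhds
    refine hm.frequently (Eventually.frequently ?_)
    filter_upwards [hτ.eventually hmax, hpos] with t hmax ht
    rw [diffQuot, le_div_iff₀ ht, sub_add_cancel]
    rw [sub_smul, ← add_sub_assoc] at hmax
    linarith

theorem neg_le_clarkeDeriv_neg_of_isLocalExtr (hU : U ∈ 𝓝 (a + τ • v))
    (hf : LipschitzOnWith K f U) (hext : IsLocalExtr (fun t => f (a + t • v) - t * s) τ) :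
    -s ≤ clarkeDeriv f (a + τ • v) (-v) := by
  have hneg : IsLocalExtr (fun t => f (a + t • -v) - t * -s) (-τ) := by
    rw [← neg_neg τ] at hext
    convert hext.comp_continuous continuous_neg.continuousAt using 2 with t
    simp only [Function.comp_apply, smul_neg, neg_smul, mul_neg, neg_mul]
  rw [← neg_smul_neg] at hU ⊢
  exact le_clarkeDeriv_of_isLocalExtr hU hf hneg

end ClarkeSubdiff

/-- Lebourg's mean value theorem, finite-dimensional case: for
`f : ℝⁿ → ℝ` locally Lipschitz and points `a, b`, there exist `τ ∈ (0, 1)` and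
`x* ∈ ∂^C f(a + τ (b - a))` with `f b - f a = ⟨x*, b - a⟩`. -/
theorem lebourg_mean_value
    {n : ℕ} (f : EuclideanSpace ℝ (Fin n) → ℝ)
    (hf : LocallyLipschitz f) (a b : EuclideanSpace ℝ (Fin n)) :
    ∃ τ ∈ Set.Ioo (0 : ℝ) 1, ∃ p ∈ clarkeSubdiff f (a + τ • (b - a)),
      f b - f a = p (b - a) := by
  set g : ℝ → ℝ := fun t => f (a + t • (b - a)) - t * (f b - f a)
  have hg : ContinuousOn g (Set.Icc 0 1) := by
    have := hf.continuous
    fun_prop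
  have hg01 : g 0 = g 1 := by simp [g]
  obtain ⟨τ, hτ, hext⟩ := exists_isLocalExtr_Ioo zero_lt_one hg hg01
  obtain ⟨K, U, hU, hfU⟩ := hf (a + τ • (b - a))
  obtain ⟨p, hp, hpv⟩ := exists_mem_clarkeSubdiff_apply_eq hU hfU
    (le_clarkeDeriv_of_isLocalExtr hU hfU hext) (neg_le_clarkeDeriv_neg_of_isLocalExtr hU hfU hext)
  exact ⟨τ, hτ, p, hp, hpv.symm⟩
end
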